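/- arXiv:2511.05285 — 5 statements merged into one kernel-verified Lean document; each statement's English description precedes it below -/
import Mathlib

section
/- For every graph G, the independence-number variant of pathwidth of the s-claw substitution of G equals the independence-number variant of pathwidth of G plus 1; that is, α-pw(s(G)) = α-pw(G) + 1. -/
namespace Awesome

open SimpleGraph

/-- Independence number of the subgraph of `G` induced by `S`. -/
noncomputable def indepNumOn {V : Type*} (G : SimpleGraph V) (S : Set V) : ℕ :=
  sSup {k | ∃ T : Finset V, ↑T ⊆ S ∧ (∀ u ∈ T, ∀ v ∈ T, ¬ G.Adj u v) ∧ T.card = k}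

/-- `H` is isomorphic to an induced subgraph of `G`. -/
def ContainsInduced {W V : Type*} (H : SimpleGraph W) (G : SimpleGraph V) : Prop :=
  ∃ S : Set V, Nonempty (H ≃g G.induce S)

/-- A path decomposition of `G`: a sequence of bags covering all vertices and edges,
with each vertex appearing in a contiguous interval of bags. -/
structure PathDecomp {V : Type*} (G : SimpleGraph V) where
  n : ℕ
  bag : Fin n → Set V
  covers_vertex : ∀ v, ∃ i, v ∈ bag i
  covers_edge : ∀ ⦃u v⦄, G.Adj u v → ∃ i, u ∈ bag i ∧ v ∈ bag i
  interval : ∀ (v : V) (i j k : Fin n), i ≤ j → j ≤ k → v ∈ bag i → v ∈ bag k → v ∈ bag j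

/-- Width of a path decomposition: the maximum bag size. -/
noncomputable def PathDecomp.width {V : Type*} {G : SimpleGraph V} (D : PathDecomp G) : ℕ :=
  Finset.univ.sup fun i => (D.bag i).ncard

/-- α-width of a path decomposition: the maximum independence number of a bag. -/
noncomputable def PathDecomp.alphaWidth {V : Type*} {G : SimpleGraph V} (D : PathDecomp G) : ℕ :=
  Finset.univ.sup fun i => indepNumOn G (D.bag i)

/-- Pathwidth (defined as maximum bag size, i.e. the usual pathwidth plus one). -/
noncomputable def pathwidth {V : Type*} (G : SimpleGraph V) : ℕ :=
  sInf {w | ∃ D : PathDecomp G, D.width = w}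

/-- α-pathwidth (path-independence number). -/
noncomputable def alphaPathwidth {V : Type*} (G : SimpleGraph V) : ℕ :=
  sInf {w | ∃ D : PathDecomp G, D.alphaWidth = w}

/-- A tree decomposition of `G`. -/
structure TreeDecomp {V : Type*} (G : SimpleGraph V) where
  ι : Type
  fintype_ι : Fintype ι
  T : SimpleGraph ι
  connected : T.Connected
  acyclic : T.IsAcyclic
  bag : ι → Set V
  covers_vertex : ∀ v, ∃ i, v ∈ bag i
  covers_edge : ∀ ⦃u v⦄, G.Adj u v → ∃ i, u ∈ bag i ∧ v ∈ bag i
  coherent : ∀ v : V, (T.induce {i | v ∈ bag i}).Connected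

/-- Width of a tree decomposition: maximum bag size. -/
noncomputable def TreeDecomp.width {V : Type*} {G : SimpleGraph V} (D : TreeDecomp G) : ℕ :=
  letI := D.fintype_ι
  Finset.univ.sup fun i => (D.bag i).ncard

/-- α-width of a tree decomposition: maximum independence number of a bag. -/
noncomputable def TreeDecomp.alphaWidth {V : Type*} {G : SimpleGraph V} (D : TreeDecomp G) : ℕ :=
  letI := D.fintype_ι
  Finset.univ.sup fun i => indepNumOn G (D.bag i)

/-- Treewidth (defined as maximum bag size, i.e. the usual treewidth plus one). -/
noncomputable def treewidth {V : Type*} (G : SimpleGraph V) : ℕ :=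
  sInf {w | ∃ D : TreeDecomp G, D.width = w}

/-- α-treewidth (tree-independence number). -/
noncomputable def alphaTreewidth {V : Type*} (G : SimpleGraph V) : ℕ :=
  sInf {w | ∃ D : TreeDecomp G, D.alphaWidth = w}

/-- A treedepth decomposition of `G`, encoded as a forest order: a partial order in which
the set of ancestors of every vertex is a chain, and every edge of `G` joins two
comparable vertices. -/
structure TreedepthDecomp {V : Type*} (G : SimpleGraph V) where
  le : V → V → Prop
  le_refl : ∀ v, le v v
  le_trans : ∀ {u v w}, le u v → le v w → le u w
  le_antisymm : ∀ {u v}, le u v → le v u → u = v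
  ancestors_chain : ∀ (v : V) {a b : V}, le a v → le b v → le a b ∨ le b a
  covers : ∀ ⦃u v⦄, G.Adj u v → le u v ∨ le v u

/-- Depth of a treedepth decomposition: the maximum number of vertices on a
root-to-leaf path, i.e. the maximum number of ancestors of a vertex (itself included). -/
noncomputable def TreedepthDecomp.depth {V : Type*} {G : SimpleGraph V}
    (D : TreedepthDecomp G) : ℕ :=
  ⨆ v : V, ({u | D.le u v} : Set V).ncard

/-- Treedepth. -/
noncomputable def treedepth {V : Type*} (G : SimpleGraph V) : ℕ :=
  sInf {d | ∃ D : TreedepthDecomp G, D.depth = d}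

/-- A vertex cover. -/
def IsVertexCover {V : Type*} (G : SimpleGraph V) (S : Set V) : Prop :=
  ∀ ⦃u v⦄, G.Adj u v → u ∈ S ∨ v ∈ S

/-- Vertex cover number. -/
noncomputable def vcNum {V : Type*} (G : SimpleGraph V) : ℕ :=
  sInf {k | ∃ S : Set V, IsVertexCover G S ∧ S.ncard = k}

/-- Every graph on `n` vertices has a clique of size `a` or an independent set of size `b`. -/
def RamseyProp (n a b : ℕ) : Prop :=
  ∀ G : SimpleGraph (Fin n),
    (∃ s : Finset (Fin n), G.IsNClique a s) ∨ (∃ s : Finset (Fin n), Gᶜ.IsNClique b s)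

/-- The Ramsey number `R(a,b)`: the least `n` such that every graph on at least `n`
vertices contains a clique of size `a` or an independent set of size `b`. -/
noncomputable def ramsey (a b : ℕ) : ℕ :=
  sInf {n | ∀ m, n ≤ m → RamseyProp m a b}

/-- The s-claw substitution of `G`: three disjoint copies of `G`, vertices `v₁ v₂ v₃`
(each complete to one copy), and a vertex `w` adjacent exactly to `v₁, v₂, v₃`. -/
def sClaw {V : Type*} (G : SimpleGraph V) :
    SimpleGraph ((Fin 3 × V) ⊕ (Fin 3 ⊕ Unit)) :=
  SimpleGraph.fromRel fun a b =>
    match a, b with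
    | Sum.inl (i, u), Sum.inl (j, v) => i = j ∧ G.Adj u v
    | Sum.inl (i, _), Sum.inr (Sum.inl j) => i = j
    | Sum.inr (Sum.inl _), Sum.inr (Sum.inr _) => True
    | _, _ => False

/-- Vertex type of the iterated s-claw substitution sequence. -/
def SType : ℕ → Type
  | 0 => Unit
  | n + 1 => (Fin 3 × SType n) ⊕ (Fin 3 ⊕ Unit)

/-- `Sgraph 0 = K₁` and `Sgraph (n+1) = sClaw (Sgraph n)`; so the paper's `Sₙ` is `Sgraph (n-1)`. -/
def Sgraph : (n : ℕ) → SimpleGraph (SType n)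
  | 0 => ⊥
  | n + 1 => sClaw (Sgraph n)

/-- A graph parameter: a map assigning a natural number to every graph. -/
abbrev GraphParam := ∀ {V : Type}, SimpleGraph V → ℕ

/-- `S` is a `(ρ,c)`-modulator of `G`: `ρ (G − S) ≤ c`. -/
def IsModulator (ρ : GraphParam) (c : ℕ) {V : Type} (G : SimpleGraph V) (S : Set V) : Prop :=
  ρ (G.induce Sᶜ) ≤ c

/-- The `(ρ,c)`-modulator number: minimum size of a `(ρ,c)`-modulator. -/
noncomputable def modNum (ρ : GraphParam) (c : ℕ) {V : Type} (G : SimpleGraph V) : ℕ :=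
  sInf {k | ∃ S : Set V, IsModulator ρ c G S ∧ S.ncard = k}

/-- The disjoint union of `n` edges. -/
def nK2 (n : ℕ) : SimpleGraph (Fin n × Fin 2) :=
  SimpleGraph.fromRel fun a b => a.1 = b.1 ∧ a.2 ≠ b.2

/-- The disjoint union of `k` copies of the complete graph on `N` vertices. -/
def unionComplete (k N : ℕ) : SimpleGraph (Fin k × Fin N) :=
  SimpleGraph.fromRel fun a b => a.1 = b.1

section Lemmas
variable {V : Type*} [Fintype V] {G : SimpleGraph V}

lemma indep_bddAbove (G : SimpleGraph V) (S : Set V) :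
    BddAbove {k | ∃ T : Finset V, ↑T ⊆ S ∧ (∀ u ∈ T, ∀ v ∈ T, ¬ G.Adj u v) ∧ T.card = k} := by
  refine ⟨Fintype.card V, fun k hk => ?_⟩
  obtain ⟨T, -, -, hc⟩ := hk
  exact hc ▸ T.card_le_univ

lemma le_indepNumOn (G : SimpleGraph V) (S : Set V) (T : Finset V)
    (h1 : ↑T ⊆ S) (h2 : ∀ u ∈ T, ∀ v ∈ T, ¬ G.Adj u v) : T.card ≤ indepNumOn G S :=
  le_csSup (indep_bddAbove G S) ⟨T, h1, h2, rfl⟩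

lemma indepNumOn_spec (G : SimpleGraph V) (S : Set V) :
    ∃ T : Finset V, ↑T ⊆ S ∧ (∀ u ∈ T, ∀ v ∈ T, ¬ G.Adj u v) ∧ T.card = indepNumOn G S := by
  have h0 : (0 : ℕ) ∈ {k | ∃ T : Finset V, ↑T ⊆ S ∧ (∀ u ∈ T, ∀ v ∈ T, ¬ G.Adj u v) ∧ T.card = k} :=
    ⟨∅, by simp, by simp, by simp⟩
  exact Nat.sSup_mem ⟨0, h0⟩ (indep_bddAbove G S)

lemma indepNumOn_le_iff (G : SimpleGraph V) (S : Set V) (m : ℕ) :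
    indepNumOn G S ≤ m ↔
      ∀ T : Finset V, ↑T ⊆ S → (∀ u ∈ T, ∀ v ∈ T, ¬ G.Adj u v) → T.card ≤ m := by
  constructor
  · intro h T h1 h2
    exact (le_indepNumOn G S T h1 h2).trans h
  · intro h
    obtain ⟨T, h1, h2, h3⟩ := indepNumOn_spec G S
    exact h3 ▸ h T h1 h2

end Lemmas

section Claw
variable {V : Type*} {G : SimpleGraph V}

@[simp] lemma sClaw_adj_inl {i j : Fin 3} {u v : V} :
    (sClaw G).Adj (Sum.inl (i, u)) (Sum.inl (j, v)) ↔ i = j ∧ G.Adj u v := by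
  simp only [sClaw, fromRel_adj]
  constructor
  · rintro ⟨-, ⟨h1, h2⟩ | ⟨h1, h2⟩⟩
    · exact ⟨h1, h2⟩
    · exact ⟨h1.symm, h2.symm⟩
  · rintro ⟨rfl, h⟩
    exact ⟨by simp [h.ne], Or.inl ⟨rfl, h⟩⟩

@[simp] lemma sClaw_adj_inl_v {i j : Fin 3} {u : V} :
    (sClaw G).Adj (Sum.inl (i, u)) (Sum.inr (Sum.inl j)) ↔ i = j := by
  simp only [sClaw, fromRel_adj]
  constructor
  · rintro ⟨-, h | h⟩
    · exact h
    · exact absurd h not_false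
  · rintro rfl
    exact ⟨by simp, Or.inl rfl⟩

@[simp] lemma sClaw_adj_v_w {i : Fin 3} {x : Unit} :
    (sClaw G).Adj (Sum.inr (Sum.inl i)) (Sum.inr (Sum.inr x)) := by
  simp only [sClaw, fromRel_adj]
  exact ⟨by simp, Or.inl trivial⟩

@[simp] lemma sClaw_not_adj_v_v {i j : Fin 3} :
    ¬ (sClaw G).Adj (Sum.inr (Sum.inl i)) (Sum.inr (Sum.inl j)) := by
  simp only [sClaw, fromRel_adj]
  rintro ⟨-, h | h⟩ <;> exact h

@[simp] lemma sClaw_not_adj_inl_w {i : Fin 3} {u : V} {x : Unit} :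
    ¬ (sClaw G).Adj (Sum.inl (i, u)) (Sum.inr (Sum.inr x)) := by
  simp only [sClaw, fromRel_adj]
  rintro ⟨-, h | h⟩ <;> exact h

end Claw

section Upper
variable {V : Type*} {G : SimpleGraph V}

def bagN (D : PathDecomp G) (i : ℕ) : Set V :=
  if h : i < D.n then D.bag ⟨i, h⟩ else ∅

lemma mem_bagN {D : PathDecomp G} {i : ℕ} {u : V} :
    u ∈ bagN D i ↔ ∃ h : i < D.n, u ∈ D.bag ⟨i, h⟩ := by
  unfold bagN; split <;> simp_all

lemma bagN_lt {D : PathDecomp G} {i : ℕ} {u : V} (h : u ∈ bagN D i) : i < D.n :=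
  (mem_bagN.mp h).1

lemma bagN_interval {D : PathDecomp G} {a b c : ℕ} {u : V} (hab : a ≤ b) (hbc : b ≤ c)
    (ha : u ∈ bagN D a) (hc : u ∈ bagN D c) : u ∈ bagN D b := by
  obtain ⟨ha', hau⟩ := mem_bagN.mp ha
  obtain ⟨hc', hcu⟩ := mem_bagN.mp hc
  have hb' : b < D.n := lt_of_le_of_lt hbc hc'
  exact mem_bagN.mpr ⟨hb', D.interval u ⟨a, ha'⟩ ⟨b, hb'⟩ ⟨c, hc'⟩ hab hbc hau hcu⟩

def upMem (D : PathDecomp G) (i : ℕ) : Set ((Fin 3 × V) ⊕ (Fin 3 ⊕ Unit)) :=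
  {x | match x with
  | Sum.inl (j, u) =>
      (j = 0 ∧ u ∈ bagN D i) ∨
      (j = 1 ∧ D.n + 2 ≤ i ∧ u ∈ bagN D (i - (D.n + 2))) ∨
      (j = 2 ∧ 2 * D.n + 3 ≤ i ∧ u ∈ bagN D (i - (2 * D.n + 3)))
  | Sum.inr (Sum.inl j) =>
      (j = 0 ∧ i ≤ D.n) ∨
      (j = 1 ∧ D.n + 1 ≤ i ∧ i ≤ 2 * D.n + 1) ∨
      (j = 2 ∧ 2 * D.n + 2 ≤ i)
  | Sum.inr (Sum.inr _) => D.n ≤ i ∧ i ≤ 2 * D.n + 2}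

lemma upMem_covers_vertex (D : PathDecomp G) (x : (Fin 3 × V) ⊕ (Fin 3 ⊕ Unit)) :
    ∃ i, i < 3 * D.n + 3 ∧ x ∈ upMem D i := by
  rcases x with ⟨j, u⟩ | j | x
  · obtain ⟨a, ha⟩ := D.covers_vertex u
    have hlt := a.isLt
    fin_cases j
    · exact ⟨a.val, by omega, Or.inl ⟨rfl, mem_bagN.mpr ⟨hlt, ha⟩⟩⟩
    · exact ⟨D.n + 2 + a.val, by omega, Or.inr (Or.inl ⟨rfl, by omega,
        mem_bagN.mpr ⟨by omega, by simpa using ha⟩⟩)⟩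
    · exact ⟨2 * D.n + 3 + a.val, by omega, Or.inr (Or.inr ⟨rfl, by omega,
        mem_bagN.mpr ⟨by omega, by simpa using ha⟩⟩)⟩
  · fin_cases j
    · exact ⟨0, by omega, Or.inl ⟨rfl, by omega⟩⟩
    · exact ⟨D.n + 1, by omega, Or.inr (Or.inl ⟨rfl, by omega, by omega⟩)⟩
    · exact ⟨2 * D.n + 2, by omega, Or.inr (Or.inr ⟨rfl, by omega⟩)⟩
  · exact ⟨D.n, by omega, by omega, by omega⟩

lemma upMem_covers_edge (D : PathDecomp G) ⦃x y : (Fin 3 × V) ⊕ (Fin 3 ⊕ Unit)⦄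
    (hadj : (sClaw G).Adj x y) :
    ∃ i, i < 3 * D.n + 3 ∧ x ∈ upMem D i ∧ y ∈ upMem D i := by
  rcases x with ⟨j, u⟩ | j | x <;> rcases y with ⟨j', u'⟩ | j' | x'
  · rw [sClaw_adj_inl] at hadj
    obtain ⟨rfl, hadj⟩ := hadj
    obtain ⟨a, ha, ha'⟩ := D.covers_edge hadj
    have hlt := a.isLt
    fin_cases j
    · exact ⟨a.val, by omega, Or.inl ⟨rfl, mem_bagN.mpr ⟨hlt, ha⟩⟩,
        Or.inl ⟨rfl, mem_bagN.mpr ⟨hlt, ha'⟩⟩⟩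
    · exact ⟨D.n + 2 + a.val, by omega,
        Or.inr (Or.inl ⟨rfl, by omega, mem_bagN.mpr ⟨by omega, by simpa using ha⟩⟩),
        Or.inr (Or.inl ⟨rfl, by omega, mem_bagN.mpr ⟨by omega, by simpa using ha'⟩⟩)⟩
    · exact ⟨2 * D.n + 3 + a.val, by omega,
        Or.inr (Or.inr ⟨rfl, by omega, mem_bagN.mpr ⟨by omega, by simpa using ha⟩⟩),
        Or.inr (Or.inr ⟨rfl, by omega, mem_bagN.mpr ⟨by omega, by simpa using ha'⟩⟩)⟩
  · rw [sClaw_adj_inl_v] at hadj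
    subst hadj
    obtain ⟨a, ha⟩ := D.covers_vertex u
    have hlt := a.isLt
    fin_cases j
    · exact ⟨a.val, by omega, Or.inl ⟨rfl, mem_bagN.mpr ⟨hlt, ha⟩⟩, Or.inl ⟨rfl, by omega⟩⟩
    · exact ⟨D.n + 2 + a.val, by omega,
        Or.inr (Or.inl ⟨rfl, by omega, mem_bagN.mpr ⟨by omega, by simpa using ha⟩⟩),
        Or.inr (Or.inl ⟨rfl, by omega, by omega⟩)⟩
    · exact ⟨2 * D.n + 3 + a.val, by omega,
        Or.inr (Or.inr ⟨rfl, by omega, mem_bagN.mpr ⟨by omega, by simpa using ha⟩⟩),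
        Or.inr (Or.inr ⟨rfl, by omega⟩)⟩
  · exact absurd hadj sClaw_not_adj_inl_w
  · rw [adj_comm, sClaw_adj_inl_v] at hadj
    subst hadj
    obtain ⟨a, ha⟩ := D.covers_vertex u'
    have hlt := a.isLt
    fin_cases j'
    · exact ⟨a.val, by omega, Or.inl ⟨rfl, by omega⟩, Or.inl ⟨rfl, mem_bagN.mpr ⟨hlt, ha⟩⟩⟩
    · exact ⟨D.n + 2 + a.val, by omega, Or.inr (Or.inl ⟨rfl, by omega, by omega⟩),
        Or.inr (Or.inl ⟨rfl, by omega, mem_bagN.mpr ⟨by omega, by simpa using ha⟩⟩)⟩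
    · exact ⟨2 * D.n + 3 + a.val, by omega, Or.inr (Or.inr ⟨rfl, by omega⟩),
        Or.inr (Or.inr ⟨rfl, by omega, mem_bagN.mpr ⟨by omega, by simpa using ha⟩⟩)⟩
  · exact absurd hadj sClaw_not_adj_v_v
  · fin_cases j
    · exact ⟨D.n, by omega, Or.inl ⟨rfl, by omega⟩, by omega, by omega⟩
    · exact ⟨D.n + 1, by omega, Or.inr (Or.inl ⟨rfl, by omega, by omega⟩), by omega, by omega⟩
    · exact ⟨2 * D.n + 2, by omega, Or.inr (Or.inr ⟨rfl, by omega⟩), by omega, by omega⟩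
  · exact absurd hadj.symm sClaw_not_adj_inl_w
  · fin_cases j'
    · exact ⟨D.n, by omega, ⟨by omega, by omega⟩, Or.inl ⟨rfl, by omega⟩⟩
    · exact ⟨D.n + 1, by omega, ⟨by omega, by omega⟩, Or.inr (Or.inl ⟨rfl, by omega, by omega⟩)⟩
    · exact ⟨2 * D.n + 2, by omega, ⟨by omega, by omega⟩, Or.inr (Or.inr ⟨rfl, by omega⟩)⟩
  · exact absurd rfl hadj.ne

lemma upMem_interval (D : PathDecomp G) (x : (Fin 3 × V) ⊕ (Fin 3 ⊕ Unit)) {a b c : ℕ}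
    (hab : a ≤ b) (hbc : b ≤ c) (h1 : x ∈ upMem D a) (h3 : x ∈ upMem D c) :
    x ∈ upMem D b := by
  rcases x with ⟨j, u⟩ | j | x
  · rcases h1 with ⟨hj, hu1⟩ | ⟨hj, hr1, hu1⟩ | ⟨hj, hr1, hu1⟩ <;> subst hj <;>
      rcases h3 with ⟨hj, hu3⟩ | ⟨hj, hr3, hu3⟩ | ⟨hj, hr3, hu3⟩ <;>
        first
        | exact absurd hj (by decide)
        | skip
    · exact Or.inl ⟨rfl, bagN_interval hab hbc hu1 hu3⟩
    · exact Or.inr (Or.inl ⟨rfl, by omega, bagN_interval (by omega) (by omega) hu1 hu3⟩)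
    · exact Or.inr (Or.inr ⟨rfl, by omega, bagN_interval (by omega) (by omega) hu1 hu3⟩)
  · rcases h1 with ⟨hj, hr1⟩ | ⟨hj, hr1, hr1'⟩ | ⟨hj, hr1⟩ <;> subst hj <;>
      rcases h3 with ⟨hj, hr3⟩ | ⟨hj, hr3, hr3'⟩ | ⟨hj, hr3⟩ <;>
        first
        | exact absurd hj (by decide)
        | skip
    · exact Or.inl ⟨rfl, by omega⟩
    · exact Or.inr (Or.inl ⟨rfl, by omega, by omega⟩)
    · exact Or.inr (Or.inr ⟨rfl, by omega⟩)
  · obtain ⟨ha, hb'⟩ := h1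
    obtain ⟨hc, hd⟩ := h3
    exact ⟨by omega, by omega⟩

def up (D : PathDecomp G) : PathDecomp (sClaw G) where
  n := 3 * D.n + 3
  bag i := upMem D i.val
  covers_vertex x := by
    obtain ⟨i, hi, hx⟩ := upMem_covers_vertex D x
    exact ⟨⟨i, hi⟩, hx⟩
  covers_edge x y hadj := by
    obtain ⟨i, hi, hx, hy⟩ := upMem_covers_edge D hadj
    exact ⟨⟨i, hi⟩, hx, hy⟩
  interval x i j k hij hjk hi hk :=
    upMem_interval D x (show i.val ≤ j.val from hij) (show j.val ≤ k.val from hjk) hi hk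

end Upper

section UpperBound
variable {V : Type*} {G : SimpleGraph V}

lemma upMem_inl_v {D : PathDecomp G} {i : ℕ} {m l : Fin 3} {u : V}
    (hx : Sum.inl (m, u) ∈ upMem D i) (hl : Sum.inr (Sum.inl l) ∈ upMem D i) : m = l := by
  rcases hx with ⟨hj, hu⟩ | ⟨hj, hr, hu⟩ | ⟨hj, hr, hu⟩ <;>
    rcases hl with ⟨hj', hr'⟩ | ⟨hj', hr', hr''⟩ | ⟨hj', hr'⟩ <;>
      subst hj <;> subst hj' <;>
        first
        | rfl
        | (exfalso; have := bagN_lt hu; omega)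

lemma upMem_v_v {D : PathDecomp G} {i : ℕ} {l l' : Fin 3}
    (hx : Sum.inr (Sum.inl l) ∈ upMem D i) (hl : Sum.inr (Sum.inl l') ∈ upMem D i) :
    l = l' := by
  rcases hx with ⟨hj, hr⟩ | ⟨hj, hr, hr0⟩ | ⟨hj, hr⟩ <;>
    rcases hl with ⟨hj', hr'⟩ | ⟨hj', hr', hr''⟩ | ⟨hj', hr'⟩ <;>
      subst hj <;> subst hj' <;>
        first
        | rfl
        | (exfalso; omega)

lemma upMem_inl_elim {D : PathDecomp G} {i : ℕ} {m : Fin 3} {u : V}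
    (h : Sum.inl (m, u) ∈ upMem D i) :
    ∃ d, u ∈ bagN D d ∧
      ∀ m' u', Sum.inl (m', u') ∈ upMem D i → m' = m ∧ u' ∈ bagN D d := by
  rcases h with ⟨hj, hu⟩ | ⟨hj, hr, hu⟩ | ⟨hj, hr, hu⟩ <;> subst hj
  · refine ⟨i, hu, ?_⟩
    rintro m' u' (⟨hj', hu'⟩ | ⟨hj', hr', hu'⟩ | ⟨hj', hr', hu'⟩) <;> subst hj'
    · exact ⟨rfl, hu'⟩
    · exfalso; have := bagN_lt hu; omega
    · exfalso; have := bagN_lt hu; omega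
  · refine ⟨i - (D.n + 2), hu, ?_⟩
    rintro m' u' (⟨hj', hu'⟩ | ⟨hj', hr', hu'⟩ | ⟨hj', hr', hu'⟩) <;> subst hj'
    · exfalso; have := bagN_lt hu'; omega
    · exact ⟨rfl, hu'⟩
    · exfalso; have := bagN_lt hu; omega
  · refine ⟨i - (2 * D.n + 3), hu, ?_⟩
    rintro m' u' (⟨hj', hu'⟩ | ⟨hj', hr', hu'⟩ | ⟨hj', hr', hu'⟩) <;> subst hj'
    · exfalso; have := bagN_lt hu'; omega
    · exfalso; have := bagN_lt hu'; omega
    · exact ⟨rfl, hu'⟩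

lemma up_alphaWidth [Fintype V] (D : PathDecomp G) :
    (up D).alphaWidth ≤ D.alphaWidth + 1 := by
  classical
  apply Finset.sup_le
  intro i _
  rw [indepNumOn_le_iff]
  intro T hsub hind
  have hsub' : ∀ x ∈ T, x ∈ upMem D i.val := fun x hx => hsub (Finset.mem_coe.mpr hx)
  by_cases hv : ∃ l : Fin 3, Sum.inr (Sum.inl l) ∈ T
  · obtain ⟨l, hl⟩ := hv
    have key : ∀ x ∈ T, x = Sum.inr (Sum.inl l) := by
      intro x hx
      rcases x with ⟨m, u⟩ | m | x
      · exact absurd (sClaw_adj_inl_v.mpr (upMem_inl_v (hsub' _ hx) (hsub' _ hl)))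
          (hind _ hx _ hl)
      · rw [upMem_v_v (hsub' _ hx) (hsub' _ hl)]
      · exact absurd (sClaw_adj_v_w (G := G)).symm (hind _ hx _ hl)
    have : T.card ≤ 1 :=
      Finset.card_le_one.mpr fun a ha b hb => (key a ha).trans (key b hb).symm
    omega
  · set w : (Fin 3 × V) ⊕ (Fin 3 ⊕ Unit) := Sum.inr (Sum.inr ()) with hw
    set T' : Finset ((Fin 3 × V) ⊕ (Fin 3 ⊕ Unit)) := T.erase w with hT'
    have hinl : ∀ x ∈ T', ∃ m u, x = Sum.inl (m, u) := by
      intro x hx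
      rcases x with ⟨m, u⟩ | m | x
      · exact ⟨m, u, rfl⟩
      · exact absurd ⟨m, Finset.mem_of_mem_erase hx⟩ hv
      · exact absurd rfl (Finset.ne_of_mem_erase hx)
    have hcard : T.card ≤ T'.card + 1 := by
      have : T ⊆ insert w T' := by
        intro x hx
        by_cases hxw : x = w
        · exact Finset.mem_insert.mpr (Or.inl hxw)
        · exact Finset.mem_insert.mpr (Or.inr (Finset.mem_erase.mpr ⟨hxw, hx⟩))
      calc T.card ≤ (insert w T').card := Finset.card_le_card this
        _ ≤ T'.card + 1 := Finset.card_insert_le _ _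
    have hT'card : T'.card ≤ D.alphaWidth := by
      rcases T'.eq_empty_or_nonempty with he | ⟨x₀, hx₀⟩
      · simp [he]
      · obtain ⟨m₀, u₀, rfl⟩ := hinl _ hx₀
        obtain ⟨d, hd, hP⟩ := upMem_inl_elim (hsub' _ (Finset.mem_of_mem_erase hx₀))
        have hdlt : d < D.n := bagN_lt hd
        set f : (Fin 3 × V) ⊕ (Fin 3 ⊕ Unit) → V :=
          fun x => match x with | Sum.inl (_, u) => u | _ => u₀ with hf
        have hinj : Set.InjOn f T' := by
          intro x hx y hy hxy
          obtain ⟨mx, ux, rfl⟩ := hinl _ (Finset.mem_coe.mp hx)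
          obtain ⟨my, uy, rfl⟩ := hinl _ (Finset.mem_coe.mp hy)
          obtain ⟨hmx, -⟩ := hP _ _ (hsub' _ (Finset.mem_of_mem_erase (Finset.mem_coe.mp hx)))
          obtain ⟨hmy, -⟩ := hP _ _ (hsub' _ (Finset.mem_of_mem_erase (Finset.mem_coe.mp hy)))
          simp only [hf] at hxy
          rw [hmx, hmy, hxy]
        have hcardim : (T'.image f).card = T'.card := Finset.card_image_of_injOn hinj
        have hsubim : ↑(T'.image f) ⊆ (D.bag ⟨d, hdlt⟩ : Set V) := by
          intro u hu
          obtain ⟨x, hx, rfl⟩ := Finset.mem_image.mp (Finset.mem_coe.mp hu)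
          obtain ⟨mx, ux, rfl⟩ := hinl _ hx
          obtain ⟨-, hux⟩ := hP _ _ (hsub' _ (Finset.mem_of_mem_erase hx))
          obtain ⟨h1, h2⟩ := mem_bagN.mp hux
          exact h2
        have hindim : ∀ u ∈ T'.image f, ∀ v ∈ T'.image f, ¬ G.Adj u v := by
          intro u hu v hvv hGadj
          obtain ⟨x, hx, rfl⟩ := Finset.mem_image.mp hu
          obtain ⟨y, hy, rfl⟩ := Finset.mem_image.mp hvv
          obtain ⟨mx, ux, rfl⟩ := hinl _ hx
          obtain ⟨my, uy, rfl⟩ := hinl _ hy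
          obtain ⟨hmx, -⟩ := hP _ _ (hsub' _ (Finset.mem_of_mem_erase hx))
          obtain ⟨hmy, -⟩ := hP _ _ (hsub' _ (Finset.mem_of_mem_erase hy))
          exact hind _ (Finset.mem_of_mem_erase hx) _ (Finset.mem_of_mem_erase hy)
            (sClaw_adj_inl.mpr ⟨hmx.trans hmy.symm, hGadj⟩)
        calc T'.card = (T'.image f).card := hcardim.symm
          _ ≤ indepNumOn G (D.bag ⟨d, hdlt⟩) := le_indepNumOn G _ _ hsubim hindim
          _ ≤ D.alphaWidth := Finset.le_sup (f := fun j => indepNumOn G (D.bag j)) (Finset.mem_univ (⟨d, hdlt⟩ : Fin D.n))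
    omega

end UpperBound

section Lower
variable {V : Type*} {G : SimpleGraph V}

def restr (D : PathDecomp (sClaw G)) (l : Fin 3) : PathDecomp G where
  n := D.n
  bag j := {u | Sum.inl (l, u) ∈ D.bag j}
  covers_vertex v := D.covers_vertex (Sum.inl (l, v))
  covers_edge u v h := D.covers_edge (sClaw_adj_inl.mpr ⟨rfl, h⟩)
  interval v i j k hij hjk hi hk := D.interval _ i j k hij hjk hi hk

lemma no_three (D : PathDecomp (sClaw G))
    {a b c : Fin 3} (hab : a ≠ b) (hcb : c ≠ b)
    {ja jb jc : Fin D.n} (h1 : ja < jb) (h2 : jb < jc)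
    (hS : ∀ x ∈ D.bag jb, (∃ u, x = Sum.inl (b, u)) ∨ x = Sum.inr (Sum.inl b))
    {ua : V} (hua : Sum.inl (a, ua) ∈ D.bag ja)
    {uc : V} (huc : Sum.inl (c, uc) ∈ D.bag jc) : False := by
  have hside : ∀ x, x ∉ D.bag jb →
      (∀ p, x ∈ D.bag p → p < jb) ∨ (∀ p, x ∈ D.bag p → jb < p) := by
    intro x hx
    by_contra hcon
    push_neg at hcon
    obtain ⟨⟨p, hp, hp'⟩, ⟨q, hq, hq'⟩⟩ := hcon
    exact hx (D.interval x q jb p hq' hp' hq hp)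
  have hstep : ∀ x y, x ∉ D.bag jb → y ∉ D.bag jb → (sClaw G).Adj x y →
      (∀ p, x ∈ D.bag p → p < jb) → (∀ p, y ∈ D.bag p → p < jb) := by
    intro x y hx hy hadj hLx
    obtain ⟨p, hxp, hyp⟩ := D.covers_edge hadj
    rcases hside y hy with h | h
    · exact h
    · exact absurd (hLx p hxp) (not_lt.mpr (h p hyp).le)
  have hnot : ∀ (m : Fin 3) (u : V), m ≠ b → Sum.inl (m, u) ∉ D.bag jb := by
    intro m u hm hmem
    rcases hS _ hmem with ⟨u', heq⟩ | heq
    · simp only [Sum.inl.injEq, Prod.mk.injEq] at heq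
      exact hm heq.1
    · exact absurd heq (by simp)
  have hnotv : ∀ (m : Fin 3), m ≠ b → Sum.inr (Sum.inl m) ∉ D.bag jb := by
    intro m hm hmem
    rcases hS _ hmem with ⟨u', heq⟩ | heq
    · exact absurd heq (by simp)
    · simp only [Sum.inr.injEq, Sum.inl.injEq] at heq
      exact hm heq
  have hnotw : Sum.inr (Sum.inr ()) ∉ D.bag jb := by
    intro hmem
    rcases hS _ hmem with ⟨u', heq⟩ | heq
    · exact absurd heq (by simp)
    · exact absurd heq (by simp)
  have hLua : ∀ p, Sum.inl (a, ua) ∈ D.bag p → p < jb := by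
    rcases hside _ (hnot a ua hab) with h | h
    · exact h
    · exact absurd (h ja hua) (not_lt.mpr h1.le)
  have L1 : ∀ p, Sum.inr (Sum.inl a) ∈ D.bag p → p < jb :=
    hstep _ _ (hnot a ua hab) (hnotv a hab) (sClaw_adj_inl_v.mpr rfl) hLua
  have L2 : ∀ p, Sum.inr (Sum.inr ()) ∈ D.bag p → p < jb :=
    hstep _ _ (hnotv a hab) hnotw sClaw_adj_v_w L1
  have L3 : ∀ p, Sum.inr (Sum.inl c) ∈ D.bag p → p < jb :=
    hstep _ _ hnotw (hnotv c hcb) sClaw_adj_v_w.symm L2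
  have L4 : ∀ p, Sum.inl (c, uc) ∈ D.bag p → p < jb :=
    hstep _ _ (hnotv c hcb) (hnot c uc hcb) (sClaw_adj_inl_v.mpr rfl).symm L3
  exact absurd (L4 jc huc) (not_lt.mpr h2.le)

lemma lower [Fintype V] (G : SimpleGraph V) (D : PathDecomp (sClaw G)) :
    ∃ l : Fin 3, (restr D l).alphaWidth + 1 ≤ D.alphaWidth := by
  classical
  obtain ⟨i₀, hi₀⟩ := D.covers_vertex (Sum.inr (Sum.inr ()))
  have hk1 : 1 ≤ D.alphaWidth := by
    have h1 : ({Sum.inr (Sum.inr ())} : Finset ((Fin 3 × V) ⊕ (Fin 3 ⊕ Unit))).card ≤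
        indepNumOn (sClaw G) (D.bag i₀) := by
      apply le_indepNumOn
      · simpa using hi₀
      · intro u hu v hv
        simp only [Finset.mem_singleton] at hu hv
        subst hu; subst hv
        exact fun h => h.ne rfl
    simp only [Finset.card_singleton] at h1
    exact h1.trans (Finset.le_sup (f := fun p => indepNumOn (sClaw G) (D.bag p))
      (Finset.mem_univ i₀))
  by_contra hcon
  push_neg at hcon
  have hge : ∀ l : Fin 3, D.alphaWidth ≤ (restr D l).alphaWidth := fun l => by
    have := hcon l; omega
  have hex : ∀ l : Fin 3, ∃ jl : Fin D.n,
      D.alphaWidth ≤ indepNumOn G ((restr D l).bag jl) := by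
    intro l
    obtain ⟨jl, -, hjl⟩ := (Finset.le_sup_iff (show (⊥ : ℕ) < D.alphaWidth by
      simp only [bot_eq_zero']; omega)).mp (hge l)
    exact ⟨jl, hjl⟩
  choose j hj using hex
  have hT : ∀ l : Fin 3, ∃ T : Finset V, ↑T ⊆ {u | Sum.inl (l, u) ∈ D.bag (j l)} ∧
      (∀ u ∈ T, ∀ v ∈ T, ¬ G.Adj u v) ∧ D.alphaWidth ≤ T.card := by
    intro l
    obtain ⟨T, h1, h2, h3⟩ := indepNumOn_spec G ((restr D l).bag (j l))
    exact ⟨T, h1, h2, h3 ▸ hj l⟩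
  choose T hT1 hT2 hT3 using hT
  have hC : ∀ l : Fin 3, ∃ u : V, Sum.inl (l, u) ∈ D.bag (j l) := by
    intro l
    obtain ⟨u, hu⟩ := Finset.card_pos.mp (lt_of_lt_of_le hk1 (hT3 l))
    exact ⟨u, hT1 l (Finset.mem_coe.mpr hu)⟩
  have hS : ∀ l : Fin 3, ∀ x ∈ D.bag (j l),
      (∃ u, x = Sum.inl (l, u)) ∨ x = Sum.inr (Sum.inl l) := by
    intro l x hx
    by_contra hcon2
    push_neg at hcon2
    obtain ⟨hx1, hx2⟩ := hcon2
    have hnadj : ∀ u : V, ¬ (sClaw G).Adj x (Sum.inl (l, u)) := by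
      intro u hadj
      rcases x with ⟨m, u'⟩ | m | x'
      · rw [adj_comm, sClaw_adj_inl] at hadj
        exact hx1 u' (by rw [hadj.1])
      · rw [adj_comm, sClaw_adj_inl_v] at hadj
        exact hx2 (by rw [hadj])
      · exact sClaw_not_adj_inl_w hadj.symm
    set img : Finset ((Fin 3 × V) ⊕ (Fin 3 ⊕ Unit)) :=
      (T l).image (fun u => Sum.inl (l, u)) with himg
    have hxnotin : x ∉ img := by
      simp only [himg, Finset.mem_image]
      rintro ⟨u, -, rfl⟩
      exact hx1 u rfl
    have hcardimg : img.card = (T l).card :=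
      Finset.card_image_of_injective _ (fun u v h => by injection h with h'; injection h')
    have hsub2 : ↑(insert x img) ⊆ (D.bag (j l) : Set _) := by
      intro y hy
      rcases Finset.mem_insert.mp (Finset.mem_coe.mp hy) with rfl | hy'
      · exact hx
      · obtain ⟨u, hu, rfl⟩ := Finset.mem_image.mp hy'
        exact hT1 l (Finset.mem_coe.mpr hu)
    have hind2 : ∀ p ∈ insert x img, ∀ q ∈ insert x img, ¬ (sClaw G).Adj p q := by
      intro p hp q hq
      rcases Finset.mem_insert.mp hp with rfl | hp' <;>
        rcases Finset.mem_insert.mp hq with rfl | hq'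
      · exact fun h => h.ne rfl
      · obtain ⟨u, -, rfl⟩ := Finset.mem_image.mp hq'
        exact hnadj u
      · obtain ⟨u, -, rfl⟩ := Finset.mem_image.mp hp'
        exact fun h => hnadj u h.symm
      · obtain ⟨u, hu, rfl⟩ := Finset.mem_image.mp hp'
        obtain ⟨u', hu', rfl⟩ := Finset.mem_image.mp hq'
        intro hadj
        rw [sClaw_adj_inl] at hadj
        exact hT2 l u hu u' hu' hadj.2
    have hbig : D.alphaWidth + 1 ≤ indepNumOn (sClaw G) (D.bag (j l)) := by
      have := le_indepNumOn (sClaw G) _ _ hsub2 hind2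
      rw [Finset.card_insert_of_notMem hxnotin, hcardimg] at this
      have := hT3 l
      omega
    have hsmall : indepNumOn (sClaw G) (D.bag (j l)) ≤ D.alphaWidth :=
      Finset.le_sup (f := fun p => indepNumOn (sClaw G) (D.bag p)) (Finset.mem_univ (j l))
    omega
  have hdist : ∀ a b : Fin 3, a ≠ b → j a ≠ j b := by
    intro a b hab heq
    obtain ⟨u, hu⟩ := hC a
    rw [heq] at hu
    rcases hS b _ hu with ⟨u', heq'⟩ | heq'
    · simp only [Sum.inl.injEq, Prod.mk.injEq] at heq'
      exact hab heq'.1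
    · exact absurd heq' (by simp)
  obtain ⟨u0, hu0⟩ := hC 0
  obtain ⟨u1, hu1⟩ := hC 1
  obtain ⟨u2, hu2⟩ := hC 2
  rcases lt_trichotomy (j 0) (j 1) with h01 | h01 | h01
  · rcases lt_trichotomy (j 1) (j 2) with h12 | h12 | h12
    · exact no_three D (by decide : (0 : Fin 3) ≠ 1) (by decide : (2 : Fin 3) ≠ 1)
        h01 h12 (hS 1) hu0 hu2
    · exact hdist 1 2 (by decide) h12
    · rcases lt_trichotomy (j 0) (j 2) with h02 | h02 | h02
      · exact no_three D (by decide : (0 : Fin 3) ≠ 2) (by decide : (1 : Fin 3) ≠ 2)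
          h02 h12 (hS 2) hu0 hu1
      · exact hdist 0 2 (by decide) h02
      · exact no_three D (by decide : (2 : Fin 3) ≠ 0) (by decide : (1 : Fin 3) ≠ 0)
          h02 h01 (hS 0) hu2 hu1
  · exact hdist 0 1 (by decide) h01
  · rcases lt_trichotomy (j 0) (j 2) with h02 | h02 | h02
    · exact no_three D (by decide : (1 : Fin 3) ≠ 0) (by decide : (2 : Fin 3) ≠ 0)
        h01 h02 (hS 0) hu1 hu2
    · exact hdist 0 2 (by decide) h02
    · rcases lt_trichotomy (j 1) (j 2) with h12 | h12 | h12
      · exact no_three D (by decide : (1 : Fin 3) ≠ 2) (by decide : (0 : Fin 3) ≠ 2)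
          h12 h02 (hS 2) hu1 hu0
      · exact hdist 1 2 (by decide) h12
      · exact no_three D (by decide : (2 : Fin 3) ≠ 1) (by decide : (0 : Fin 3) ≠ 1)
          h12 h01 (hS 1) hu2 hu0

end Lower

def trivDecomp {V : Type*} (G : SimpleGraph V) : PathDecomp G where
  n := 1
  bag _ := Set.univ
  covers_vertex _ := ⟨0, trivial⟩
  covers_edge _ _ _ := ⟨0, trivial, trivial⟩
  interval _ _ _ _ _ _ _ _ := trivial

theorem stmt4 {V : Type} [Fintype V] (G : SimpleGraph V) :
    alphaPathwidth (sClaw G) = alphaPathwidth G + 1 := by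
  classical
  have hne1 : {w | ∃ D : PathDecomp (sClaw G), D.alphaWidth = w}.Nonempty :=
    ⟨_, trivDecomp _, rfl⟩
  have hne2 : {w | ∃ D : PathDecomp G, D.alphaWidth = w}.Nonempty :=
    ⟨_, trivDecomp _, rfl⟩
  apply le_antisymm
  · obtain ⟨D, hD⟩ := Nat.sInf_mem hne2
    have hD' : D.alphaWidth = alphaPathwidth G := hD
    calc alphaPathwidth (sClaw G) ≤ (up D).alphaWidth := Nat.sInf_le ⟨up D, rfl⟩
      _ ≤ D.alphaWidth + 1 := up_alphaWidth D
      _ = alphaPathwidth G + 1 := by rw [hD']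
  · obtain ⟨D, hD⟩ := Nat.sInf_mem hne1
    have hD' : D.alphaWidth = alphaPathwidth (sClaw G) := hD
    obtain ⟨l, hl⟩ := lower G D
    have h2 : alphaPathwidth G ≤ (restr D l).alphaWidth := Nat.sInf_le ⟨restr D l, rfl⟩
    rw [hD'] at hl
    omega
end Awesome
end

section
/- For every graph G, α-pw(s(G)) ≤ α-pw(G) + 1, i.e., the α-pathwidth of the s-claw substitution of G is at most the α-pathwidth of G plus one. -/
namespace Awesome

open SimpleGraph

-- the bag construction
def sBag {V : Type} (G : SimpleGraph V) (D : PathDecomp G) (k : ℕ) :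
    Set ((Fin 3 × V) ⊕ (Fin 3 ⊕ Unit)) :=
  {x | match x with
    | Sum.inl (i, u) => i.val = k / (D.n + 1) ∧ ∃ h : k % (D.n + 1) < D.n, u ∈ D.bag ⟨k % (D.n + 1), h⟩
    | Sum.inr (Sum.inl i) => i.val = k / (D.n + 1)
    | Sum.inr (Sum.inr _) => True}

lemma mem_sBag_inl {V : Type} {G : SimpleGraph V} {D : PathDecomp G} {k : ℕ} {i : Fin 3} {u : V} :
    Sum.inl (i, u) ∈ sBag G D k ↔
      i.val = k / (D.n + 1) ∧ ∃ h : k % (D.n + 1) < D.n, u ∈ D.bag ⟨k % (D.n + 1), h⟩ :=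
  Iff.rfl

lemma mem_sBag_v {V : Type} {G : SimpleGraph V} {D : PathDecomp G} {k : ℕ} {i : Fin 3} :
    Sum.inr (Sum.inl i) ∈ sBag G D k ↔ i.val = k / (D.n + 1) := Iff.rfl

lemma mem_sBag_w {V : Type} {G : SimpleGraph V} {D : PathDecomp G} {k : ℕ} :
    Sum.inr (Sum.inr ()) ∈ sBag G D k := trivial

-- adjacency facts
lemma sClaw_adj_ll {V : Type} {G : SimpleGraph V} {i j : Fin 3} {u v : V}
    (h : i = j) (ha : G.Adj u v) : (sClaw G).Adj (Sum.inl (i, u)) (Sum.inl (j, v)) := by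
  subst h
  refine ⟨by simp [ha.ne], Or.inl ⟨rfl, ha⟩⟩

lemma sClaw_adj_lv {V : Type} {G : SimpleGraph V} {i : Fin 3} {u : V} :
    (sClaw G).Adj (Sum.inl (i, u)) (Sum.inr (Sum.inl i)) :=
  ⟨by simp, Or.inl rfl⟩

lemma sClaw_adj_vw {V : Type} {G : SimpleGraph V} {i : Fin 3} :
    (sClaw G).Adj (Sum.inr (Sum.inl i)) (Sum.inr (Sum.inr ())) :=
  ⟨by simp, Or.inl trivial⟩

lemma div_mod_calc (m a b : ℕ) (hb : b < m + 1) :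
    (a * (m + 1) + b) / (m + 1) = a ∧ (a * (m + 1) + b) % (m + 1) = b := by
  constructor
  · rw [mul_comm, Nat.mul_add_div (Nat.succ_pos m), Nat.div_eq_of_lt hb, add_zero]
  · rw [mul_comm, Nat.mul_add_mod, Nat.mod_eq_of_lt hb]

def sDecomp {V : Type} (G : SimpleGraph V) (D : PathDecomp G) : PathDecomp (sClaw G) where
  n := 3 * (D.n + 1)
  bag k := sBag G D k.val
  covers_vertex x := by
    match x with
    | Sum.inl (i, u) =>
      obtain ⟨j, hj⟩ := D.covers_vertex u
      refine ⟨⟨i.val * (D.n + 1) + j.val, ?_⟩, ?_⟩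
      · calc i.val * (D.n + 1) + j.val < i.val * (D.n + 1) + (D.n + 1) := by
              omega
          _ = (i.val + 1) * (D.n + 1) := by ring
          _ ≤ 3 * (D.n + 1) := by
              have := i.isLt; exact Nat.mul_le_mul_right _ (by omega)
      · obtain ⟨h1, h2⟩ := div_mod_calc D.n i.val j.val (by omega)
        refine mem_sBag_inl.mpr ⟨h1.symm, ?_⟩
        rw [h2]
        exact ⟨j.isLt, by simpa using hj⟩
    | Sum.inr (Sum.inl i) =>
      refine ⟨⟨i.val * (D.n + 1) + D.n, ?_⟩, ?_⟩
      · calc i.val * (D.n + 1) + D.n < (i.val + 1) * (D.n + 1) := by ring_nf; omega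
          _ ≤ 3 * (D.n + 1) := Nat.mul_le_mul_right _ (by have := i.isLt; omega)
      · exact mem_sBag_v.mpr (div_mod_calc D.n i.val D.n (by omega)).1.symm
    | Sum.inr (Sum.inr ()) => exact ⟨⟨0, by omega⟩, mem_sBag_w⟩
  covers_edge x y hxy := by
    obtain ⟨hne, hr⟩ := hxy
    match x, y with
    | Sum.inl (i, u), Sum.inl (j, v) =>
      have hij : i = j ∧ G.Adj u v := by
        rcases hr with h | h
        · exact h
        · exact ⟨h.1.symm, h.2.symm⟩
      obtain ⟨rfl, hadj⟩ := hij
      obtain ⟨p, hp1, hp2⟩ := D.covers_edge hadj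
      refine ⟨⟨i.val * (D.n + 1) + p.val, ?_⟩, ?_, ?_⟩
      · calc i.val * (D.n + 1) + p.val < (i.val + 1) * (D.n + 1) := by
              have := p.isLt; ring_nf; omega
          _ ≤ 3 * (D.n + 1) := Nat.mul_le_mul_right _ (by have := i.isLt; omega)
      all_goals {
        obtain ⟨h1, h2⟩ := div_mod_calc D.n i.val p.val (by have := p.isLt; omega)
        refine mem_sBag_inl.mpr ⟨h1.symm, ?_⟩
        rw [h2]
        first
        | exact ⟨p.isLt, by simpa using hp1⟩
        | exact ⟨p.isLt, by simpa using hp2⟩ }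
    | Sum.inl (i, u), Sum.inr (Sum.inl j) =>
      have hij : i = j := by rcases hr with h | h; exacts [h, nomatch h]
      subst hij
      obtain ⟨p, hp⟩ := D.covers_vertex u
      refine ⟨⟨i.val * (D.n + 1) + p.val, ?_⟩, ?_, ?_⟩
      · calc i.val * (D.n + 1) + p.val < (i.val + 1) * (D.n + 1) := by
              have := p.isLt; ring_nf; omega
          _ ≤ 3 * (D.n + 1) := Nat.mul_le_mul_right _ (by have := i.isLt; omega)
      · obtain ⟨h1, h2⟩ := div_mod_calc D.n i.val p.val (by have := p.isLt; omega)
        refine mem_sBag_inl.mpr ⟨h1.symm, ?_⟩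
        rw [h2]; exact ⟨p.isLt, by simpa using hp⟩
      · obtain ⟨h1, _⟩ := div_mod_calc D.n i.val p.val (by have := p.isLt; omega)
        exact mem_sBag_v.mpr h1.symm
    | Sum.inr (Sum.inl i), Sum.inl (j, u) =>
      have hij : j = i := by rcases hr with h | h; exacts [h.elim, h]
      subst hij
      obtain ⟨p, hp⟩ := D.covers_vertex u
      refine ⟨⟨j.val * (D.n + 1) + p.val, ?_⟩, ?_, ?_⟩
      · calc j.val * (D.n + 1) + p.val < (j.val + 1) * (D.n + 1) := by
              have := p.isLt; ring_nf; omega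
          _ ≤ 3 * (D.n + 1) := Nat.mul_le_mul_right _ (by have := j.isLt; omega)
      · obtain ⟨h1, _⟩ := div_mod_calc D.n j.val p.val (by have := p.isLt; omega)
        exact mem_sBag_v.mpr h1.symm
      · obtain ⟨h1, h2⟩ := div_mod_calc D.n j.val p.val (by have := p.isLt; omega)
        refine mem_sBag_inl.mpr ⟨h1.symm, ?_⟩
        rw [h2]; exact ⟨p.isLt, by simpa using hp⟩
    | Sum.inr (Sum.inl i), Sum.inr (Sum.inr ()) =>
      refine ⟨⟨i.val * (D.n + 1), ?_⟩, ?_, mem_sBag_w⟩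
      · exact lt_of_lt_of_le (by have := i.isLt; ring_nf; omega : i.val * (D.n+1) < (i.val+1)*(D.n+1))
          (Nat.mul_le_mul_right _ (by have := i.isLt; omega))
      · have := div_mod_calc D.n i.val 0 (by omega)
        simp only [add_zero] at this
        exact mem_sBag_v.mpr this.1.symm
    | Sum.inr (Sum.inr ()), Sum.inr (Sum.inl i) =>
      refine ⟨⟨i.val * (D.n + 1), ?_⟩, mem_sBag_w, ?_⟩
      · exact lt_of_lt_of_le (by have := i.isLt; ring_nf; omega : i.val * (D.n+1) < (i.val+1)*(D.n+1))
          (Nat.mul_le_mul_right _ (by have := i.isLt; omega))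
      · have := div_mod_calc D.n i.val 0 (by omega)
        simp only [add_zero] at this
        exact mem_sBag_v.mpr this.1.symm
    | Sum.inl _, Sum.inr (Sum.inr ()) => exact absurd hr (by simp)
    | Sum.inr (Sum.inr ()), Sum.inl _ => exact absurd hr (by simp)
    | Sum.inr (Sum.inl _), Sum.inr (Sum.inl _) => exact absurd hr (by simp)
    | Sum.inr (Sum.inr ()), Sum.inr (Sum.inr ()) => exact absurd rfl hne
  interval x i j k hij hjk hi hk := by
    have hijv : i.val ≤ j.val := hij
    have hjkv : j.val ≤ k.val := hjk
    have hq1 : i.val / (D.n + 1) ≤ j.val / (D.n + 1) := Nat.div_le_div_right hijv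
    have hq2 : j.val / (D.n + 1) ≤ k.val / (D.n + 1) := Nat.div_le_div_right hjkv
    match x with
    | Sum.inr (Sum.inr ()) => exact mem_sBag_w
    | Sum.inr (Sum.inl t) =>
      have h1 := mem_sBag_v.mp hi
      have h2 := mem_sBag_v.mp hk
      exact mem_sBag_v.mpr (by omega)
    | Sum.inl (t, u) =>
      obtain ⟨hq, pi, hui⟩ := mem_sBag_inl.mp hi
      obtain ⟨hq', pk, huk⟩ := mem_sBag_inl.mp hk
      have hqj : t.val = j.val / (D.n + 1) := by omega
      have hqi : i.val / (D.n + 1) = t.val := hq.symm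
      have hqk : k.val / (D.n + 1) = t.val := hq'.symm
      have hqj2 : j.val / (D.n + 1) = t.val := by omega
      have di := Nat.div_add_mod i.val (D.n + 1)
      have dj := Nat.div_add_mod j.val (D.n + 1)
      have dk := Nat.div_add_mod k.val (D.n + 1)
      rw [hqi] at di; rw [hqj2] at dj; rw [hqk] at dk
      have hpij : i.val % (D.n + 1) ≤ j.val % (D.n + 1) := by omega
      have hpjk : j.val % (D.n + 1) ≤ k.val % (D.n + 1) := by omega
      refine mem_sBag_inl.mpr ⟨hqj, by omega, ?_⟩
      exact D.interval u ⟨i.val % (D.n + 1), by omega⟩ ⟨j.val % (D.n + 1), by omega⟩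
        ⟨k.val % (D.n + 1), pk⟩ hpij hpjk hui huk

lemma indepNumOn_bddAbove {V : Type} [Fintype V] (G : SimpleGraph V) (S : Set V) :
    BddAbove {k | ∃ T : Finset V, ↑T ⊆ S ∧ (∀ u ∈ T, ∀ v ∈ T, ¬ G.Adj u v) ∧ T.card = k} := by
  refine ⟨Fintype.card V, fun x hx => ?_⟩
  obtain ⟨T, _, _, hc⟩ := hx
  exact hc ▸ T.card_le_univ

lemma sBag_indep_bound {V : Type} [Fintype V] (G : SimpleGraph V) (D : PathDecomp G) (k : ℕ) :
    indepNumOn (sClaw G) (sBag G D k) ≤ D.alphaWidth + 1 := by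
  unfold indepNumOn
  refine csSup_le ⟨0, ∅, by simp, by simp, rfl⟩ ?_
  rintro x ⟨T, hTsub, hTind, rfl⟩
  by_cases hv : ∃ t : Fin 3, Sum.inr (Sum.inl t) ∈ T
  · obtain ⟨t, ht⟩ := hv
    have hall : ∀ a ∈ T, a = Sum.inr (Sum.inl t) := by
      intro a ha
      have hts : t.val = k / (D.n + 1) := mem_sBag_v.mp (hTsub ht)
      match a with
      | Sum.inl (i, u) =>
        have his : i.val = k / (D.n + 1) := (mem_sBag_inl.mp (hTsub ha)).1
        have hit : i = t := Fin.ext (by omega)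
        exact absurd (hit ▸ sClaw_adj_lv) (hTind _ ha _ ht)
      | Sum.inr (Sum.inl t') =>
        have : t'.val = k / (D.n + 1) := mem_sBag_v.mp (hTsub ha)
        exact congrArg (Sum.inr ∘ Sum.inl) (Fin.ext (by omega))
      | Sum.inr (Sum.inr ()) =>
        exact absurd sClaw_adj_vw.symm (hTind _ ha _ ht)
    calc T.card ≤ 1 := Finset.card_le_one.mpr fun a ha b hb => (hall a ha).trans (hall b hb).symm
      _ ≤ D.alphaWidth + 1 := by omega
  · by_cases hVne : Nonempty V
    · obtain ⟨u₀⟩ := hVne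
      set g : (Fin 3 × V) ⊕ (Fin 3 ⊕ Unit) → V := fun a =>
        match a with
        | Sum.inl (_, u) => u
        | _ => u₀ with hg
      classical
      set T₁ := T.filter (fun a => a.isLeft) with hT₁
      have hsplit := Finset.card_filter_add_card_filter_not
        (s := T) (p := fun a => a.isLeft = true)
      beta_reduce at hsplit
      rw [← hT₁] at hsplit
      have hT₂ : (T.filter (fun a => ¬ (a.isLeft = true))).card ≤ 1 := by
        refine Finset.card_le_one.mpr ?_
        intro a ha b hb
        have key : ∀ c ∈ T.filter (fun a => ¬ (a.isLeft = true)),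
            c = Sum.inr (Sum.inr ()) := by
          intro c hc
          obtain ⟨hcT, hcL⟩ := Finset.mem_filter.mp hc
          match c with
          | Sum.inl _ => simp at hcL
          | Sum.inr (Sum.inl t) => exact absurd ⟨t, hcT⟩ hv
          | Sum.inr (Sum.inr ()) => rfl
        exact (key a ha).trans (key b hb).symm
      have hmemT₁ : ∀ a ∈ T₁, ∃ i u, a = Sum.inl (i, u) ∧ i.val = k / (D.n + 1) := by
        intro a ha
        obtain ⟨haT, haL⟩ := Finset.mem_filter.mp ha
        match a with
        | Sum.inl (i, u) => exact ⟨i, u, rfl, by simpa using (mem_sBag_inl.mp (hTsub haT)).1⟩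
      have hginj : Set.InjOn g ↑T₁ := by
        intro a ha b hb hgab
        obtain ⟨i, u, rfl, hi⟩ := hmemT₁ a ha
        obtain ⟨i', u', rfl, hi'⟩ := hmemT₁ b hb
        have : u = u' := hgab
        subst this
        have hii : i = i' := Fin.ext (by omega)
        rw [hii]
      have hcard' : (T₁.image g).card = T₁.card := Finset.card_image_of_injOn hginj
      rcases T₁.eq_empty_or_nonempty with hemp | ⟨a₀, ha₀⟩
      · have : T.card ≤ 1 := by
          rw [← hsplit]
          have : T₁.card = 0 := by rw [hemp]; rfl
          omega
        omega
      · obtain ⟨i₀, u₀', rfl, _⟩ := hmemT₁ a₀ ha₀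
        obtain ⟨_, hp, _⟩ := mem_sBag_inl.mp (hTsub (Finset.mem_filter.mp ha₀).1)
        have hT'sub : ↑(T₁.image g) ⊆ D.bag ⟨k % (D.n + 1), hp⟩ := by
          intro u hu
          obtain ⟨a, ha, rfl⟩ := Finset.mem_coe.mp hu |> fun h => Finset.mem_image.mp h
          obtain ⟨i, u', rfl, _⟩ := hmemT₁ a ha
          obtain ⟨_, hp', hu'⟩ := mem_sBag_inl.mp (hTsub (Finset.mem_filter.mp ha).1)
          exact hu'
        have hT'ind : ∀ u ∈ T₁.image g, ∀ v ∈ T₁.image g, ¬ G.Adj u v := by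
          intro u hu v hv hadj
          obtain ⟨a, ha, rfl⟩ := Finset.mem_image.mp hu
          obtain ⟨b, hb, rfl⟩ := Finset.mem_image.mp hv
          obtain ⟨i, u', rfl, hi⟩ := hmemT₁ a ha
          obtain ⟨i', v', rfl, hi'⟩ := hmemT₁ b hb
          have hii : i = i' := Fin.ext (by omega)
          exact hTind _ (Finset.mem_filter.mp ha).1 _ (Finset.mem_filter.mp hb).1
            (sClaw_adj_ll hii hadj)
        have h1 : (T₁.image g).card ≤ indepNumOn G (D.bag ⟨k % (D.n + 1), hp⟩) :=
          le_csSup (indepNumOn_bddAbove G _) ⟨T₁.image g, hT'sub, hT'ind, rfl⟩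
        have h2 : indepNumOn G (D.bag ⟨k % (D.n + 1), hp⟩) ≤ D.alphaWidth :=
          Finset.le_sup (f := fun i => indepNumOn G (D.bag i))
            (Finset.mem_univ (⟨k % (D.n + 1), hp⟩ : Fin D.n))
        omega
    · rw [not_nonempty_iff] at hVne
      have hall : ∀ a ∈ T, a = Sum.inr (Sum.inr ()) := by
        intro a ha
        match a with
        | Sum.inl (i, u) => exact (hVne.false u).elim
        | Sum.inr (Sum.inl t) => exact absurd ⟨t, ha⟩ hv
        | Sum.inr (Sum.inr ()) => rfl
      calc T.card ≤ 1 := Finset.card_le_one.mpr fun a ha b hb => (hall a ha).trans (hall b hb).symm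
        _ ≤ D.alphaWidth + 1 := by omega

theorem stmt5 {V : Type} [Fintype V] (G : SimpleGraph V) :
    alphaPathwidth (sClaw G) ≤ alphaPathwidth G + 1 := by
  have hne : {w | ∃ D : PathDecomp G, D.alphaWidth = w}.Nonempty :=
    ⟨_, ⟨⟨1, fun _ => Set.univ, fun v => ⟨0, trivial⟩, fun u v _ => ⟨0, trivial, trivial⟩,
      fun _ _ _ _ _ _ _ _ => trivial⟩, rfl⟩⟩
  obtain ⟨D, hD⟩ := Nat.sInf_mem hne
  have h1 : alphaPathwidth (sClaw G) ≤ (sDecomp G D).alphaWidth :=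
    Nat.sInf_le ⟨sDecomp G D, rfl⟩
  have h2 : (sDecomp G D).alphaWidth ≤ D.alphaWidth + 1 := by
    refine Finset.sup_le fun k _ => ?_
    exact sBag_indep_bound G D k.val
  have hD' : D.alphaWidth = alphaPathwidth G := hD
  omega
end Awesome
end

section
/- Define S₁ = K₁ and Sₙ = s(Sₙ₋₁) for n ≥ 2. Then for every n and every induced subgraph G of Sₙ, the treedepth of G is at most 2·ω(G), where ω is the clique number. -/
namespace Awesome

open SimpleGraph

section AuxProofs

open Classical in
instance sTypeFintype : ∀ n, Fintype (SType n)
  | 0 => inferInstanceAs (Fintype Unit)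
  | n + 1 =>
      letI := sTypeFintype n
      inferInstanceAs (Fintype ((Fin 3 × SType n) ⊕ (Fin 3 ⊕ Unit)))

lemma treedepth_le_depth {V : Type*} (G : SimpleGraph V) (D : TreedepthDecomp G) :
    treedepth G ≤ D.depth :=
  Nat.sInf_le ⟨D, rfl⟩

lemma exists_decomp_treedepth {V : Type*} (G : SimpleGraph V) :
    ∃ D : TreedepthDecomp G, D.depth = treedepth G := by
  classical
  letI : LinearOrder V := linearOrderOfSTO WellOrderingRel
  have D0 : TreedepthDecomp G :=
    { le := (· ≤ ·), le_refl := le_refl, le_trans := fun h h' => h.trans h',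
      le_antisymm := fun h h' => le_antisymm h h',
      ancestors_chain := fun _ {a b} _ _ => le_total a b,
      covers := fun u v _ => le_total u v }
  have hne : {d | ∃ D : TreedepthDecomp G, D.depth = d}.Nonempty := ⟨D0.depth, D0, rfl⟩
  exact Nat.sInf_mem hne

lemma one_le_cliqueNum {V : Type*} [Fintype V] (G : SimpleGraph V) (v : V) :
    1 ≤ G.cliqueNum := by
  classical
  have hc : G.IsClique (({v} : Finset V) : Set V) := by
    simp [SimpleGraph.IsClique, Set.Pairwise]
  have := @SimpleGraph.IsClique.card_le_cliqueNum _ G _ _ hc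
  simpa using this

lemma cliqueNum_le_of_map {α β : Type*} [Fintype α] [Fintype β]
    (G : SimpleGraph α) (H : SimpleGraph β) (f : α → β) (hinj : Function.Injective f)
    (hadj : ∀ a b, G.Adj a b → H.Adj (f a) (f b)) : G.cliqueNum ≤ H.cliqueNum := by
  classical
  obtain ⟨s, hs⟩ := G.exists_isNClique_cliqueNum
  have hc : H.IsClique ((s.image f : Finset β) : Set β) := by
    intro x hx y hy hxy
    simp only [Finset.coe_image, Set.mem_image, Finset.mem_coe] at hx hy
    obtain ⟨a, ha, rfl⟩ := hx
    obtain ⟨b, hb, rfl⟩ := hy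
    exact hadj a b (hs.1 (Finset.mem_coe.mpr ha) (Finset.mem_coe.mpr hb)
      (fun h => hxy (by rw [h])))
  have hle := @SimpleGraph.IsClique.card_le_cliqueNum _ H _ _ hc
  rwa [Finset.card_image_of_injective _ hinj, hs.2] at hle

lemma cliqueNum_add_one_le_of_map {α β : Type*} [Fintype α] [Fintype β]
    (G : SimpleGraph α) (H : SimpleGraph β) (f : α → β) (hinj : Function.Injective f)
    (hadj : ∀ a b, G.Adj a b → H.Adj (f a) (f b)) (z : β)
    (hz : ∀ a, H.Adj (f a) z) : G.cliqueNum + 1 ≤ H.cliqueNum := by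
  classical
  obtain ⟨s, hs⟩ := G.exists_isNClique_cliqueNum
  have hzmem : z ∉ s.image f := by
    intro h
    simp only [Finset.mem_image] at h
    obtain ⟨a, _, rfl⟩ := h
    exact (hz a).ne rfl
  have hc : H.IsClique ((insert z (s.image f) : Finset β) : Set β) := by
    intro x hx y hy hxy
    simp only [Finset.coe_insert, Set.mem_insert_iff, Finset.coe_image,
      Set.mem_image, Finset.mem_coe] at hx hy
    rcases hx with rfl | ⟨a, ha, rfl⟩
    · rcases hy with rfl | ⟨b, hb, rfl⟩
      · exact absurd rfl hxy
      · exact (hz b).symm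
    · rcases hy with rfl | ⟨b, hb, rfl⟩
      · exact hz a
      · exact hadj a b (hs.1 (Finset.mem_coe.mpr ha) (Finset.mem_coe.mpr hb)
          (fun h => hxy (by rw [h])))
  have hle := @SimpleGraph.IsClique.card_le_cliqueNum _ H _ _ hc
  rwa [Finset.card_insert_of_notMem hzmem,
    Finset.card_image_of_injective _ hinj, hs.2] at hle

variable {W : Type} (H : SimpleGraph W) (A : Set ((Fin 3 × W) ⊕ (Fin 3 ⊕ Unit)))

/-- The part of `A` inside copy `j`. -/
def copySet (j : Fin 3) : Set W := {u | Sum.inl (j, u) ∈ A}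

/-- The forest order on an induced subgraph of `sClaw H`. -/
def stepLe (D : ∀ j : Fin 3, TreedepthDecomp (H.induce (copySet A j))) :
    ↥A → ↥A → Prop
  | ⟨Sum.inl (i, u), ha⟩, ⟨Sum.inl (j, v), hb⟩ =>
      ∃ h : i = j, (D j).le ⟨u, by subst h; exact ha⟩ ⟨v, hb⟩
  | ⟨Sum.inl _, _⟩, ⟨Sum.inr _, _⟩ => False
  | ⟨Sum.inr (Sum.inl i), _⟩, ⟨Sum.inl (j, _), _⟩ => i = j
  | ⟨Sum.inr (Sum.inl i), _⟩, ⟨Sum.inr (Sum.inl j), _⟩ => i = j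
  | ⟨Sum.inr (Sum.inl _), _⟩, ⟨Sum.inr (Sum.inr _), _⟩ => False
  | ⟨Sum.inr (Sum.inr _), _⟩, ⟨Sum.inl (j, _), _⟩ => Sum.inr (Sum.inl j) ∈ A
  | ⟨Sum.inr (Sum.inr _), _⟩, ⟨Sum.inr _, _⟩ => True

/-- The treedepth decomposition of an induced subgraph of `sClaw H`. -/
def stepDecomp (D : ∀ j : Fin 3, TreedepthDecomp (H.induce (copySet A j))) :
    TreedepthDecomp ((sClaw H).induce A) where
  le := stepLe H A D
  le_refl := by
    rintro ⟨(⟨i, u⟩ | i | u), ha⟩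
    · exact ⟨rfl, (D i).le_refl _⟩
    · exact rfl
    · exact trivial
  le_trans := by
    rintro ⟨(⟨i, u⟩ | i | u), ha⟩ ⟨(⟨j, v⟩ | j | v), hb⟩ ⟨(⟨k, w⟩ | k | w), hc⟩ h1 h2 <;>
      simp only [stepLe] at h1 h2 ⊢ <;>
      first
      | exact trivial
      | exact h1.elim
      | exact h2.elim
      | (obtain ⟨rfl, h1⟩ := h1
         obtain ⟨rfl, h2⟩ := h2
         exact ⟨rfl, (D _).le_trans h1 h2⟩)
      | (obtain ⟨rfl, _⟩ := h2; exact h1)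
      | (subst h1; exact h2)
      | (subst h2; exact hb)
      | exact h2
      | exact h1
  le_antisymm := by
    rintro ⟨(⟨i, u⟩ | i | u), ha⟩ ⟨(⟨j, v⟩ | j | v), hb⟩ h1 h2 <;>
      simp only [stepLe] at h1 h2 <;>
      first
      | exact h1.elim
      | exact h2.elim
      | rfl
      | (subst h1; rfl)
      | (obtain ⟨rfl, h1⟩ := h1
         obtain ⟨_, h2⟩ := h2
         have huv : u = v := congrArg Subtype.val ((D i).le_antisymm h1 h2)
         subst huv
         rfl)
  ancestors_chain := by
    rintro ⟨(⟨k, w⟩ | k | w), hc⟩ ⟨(⟨i, u⟩ | i | u), ha⟩ ⟨(⟨j, v⟩ | j | v), hb⟩ h1 h2 <;>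
      simp only [stepLe] at h1 h2 ⊢ <;>
      first
      | exact Or.inl trivial
      | exact Or.inr trivial
      | exact h1.elim
      | exact h2.elim
      | (obtain ⟨rfl, h1⟩ := h1
         obtain ⟨rfl, h2⟩ := h2
         rcases (D _).ancestors_chain _ h1 h2 with h | h
         · exact Or.inl ⟨rfl, h⟩
         · exact Or.inr ⟨rfl, h⟩)
      | (obtain ⟨rfl, _⟩ := h1; exact Or.inr h2)
      | (obtain ⟨rfl, _⟩ := h2; exact Or.inl h1)
      | exact Or.inl (h1.trans h2.symm)
      | exact Or.inr (h2.trans h1.symm)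
  covers := by
    rintro ⟨(⟨i, u⟩ | i | u), ha⟩ ⟨(⟨j, v⟩ | j | v), hb⟩ hadj <;>
      rw [SimpleGraph.comap_adj, sClaw, SimpleGraph.fromRel_adj] at hadj <;>
      obtain ⟨hne, hrel⟩ := hadj <;>
      simp only [stepLe] <;>
      first
      | exact absurd rfl hne
      | exact hrel.elim (fun h => h.elim) (fun h => h.elim)
      | exact Or.inr (hrel.elim Eq.symm (fun h => h.elim))
      | exact Or.inl (hrel.elim (fun h => h.elim) Eq.symm)
      | exact Or.inr trivial
      | exact Or.inl trivial
      | (have hij : i = j ∧ H.Adj u v := by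
           rcases hrel with ⟨rfl, h⟩ | ⟨rfl, h⟩
           · exact ⟨rfl, h⟩
           · exact ⟨rfl, h.symm⟩
         obtain ⟨rfl, hH⟩ := hij
         have hGj : (H.induce (copySet A i)).Adj ⟨u, ha⟩ ⟨v, hb⟩ := hH
         rcases (D i).covers hGj with h | h
         · exact Or.inl ⟨rfl, h⟩
         · exact Or.inr ⟨rfl, h⟩)


lemma ncard_val_eq_le_one {α : Type*} (A : Set α) (c : α) :
    {x : ↥A | (x : α) = c}.ncard ≤ 1 := by
  have hss : ({x : ↥A | (x : α) = c}).Subsingleton :=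
    fun a ha b hb => Subtype.ext (ha.trans hb.symm)
  exact (Set.ncard_le_one hss.finite).mpr fun a ha b hb => Subtype.ext (ha.trans hb.symm)

lemma step_depth_le [Fintype W] (D : ∀ j : Fin 3, TreedepthDecomp (H.induce (copySet A j)))
    (hD : ∀ j, (D j).depth ≤ 2 * (H.induce (copySet A j)).cliqueNum) :
    (stepDecomp H A D).depth ≤ 2 * ((sClaw H).induce A).cliqueNum := by
  classical
  letI : Fintype ↥A := Fintype.ofFinite _
  letI : ∀ j, Fintype ↥(copySet A j) := fun j => Fintype.ofFinite _
  rw [TreedepthDecomp.depth]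
  rcases isEmpty_or_nonempty ↥A with h | h
  · simp [ciSup_of_empty]
  have hω1 : 1 ≤ ((sClaw H).induce A).cliqueNum := one_le_cliqueNum _ h.some
  apply ciSup_le
  rintro ⟨(⟨j, v⟩ | j | v), hb⟩
  -- Case 1: a vertex in copy j
  · have hf2 : ∀ u : ↥(copySet A j), Sum.inl (j, (u : W)) ∈ A := fun u => u.2
    let f : ↥(copySet A j) → ↥A := fun u => ⟨Sum.inl (j, (u : W)), hf2 u⟩
    have finj : Function.Injective f := by
      intro a b hab
      apply Subtype.ext
      have h1 := congrArg Subtype.val hab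
      simp only [f, Sum.inl.injEq, Prod.mk.injEq] at h1
      exact h1.2
    have fadj : ∀ a b, (H.induce (copySet A j)).Adj a b →
        ((sClaw H).induce A).Adj (f a) (f b) := by
      intro a b hab
      have hne : (a : W) ≠ (b : W) := fun h => hab.ne (Subtype.ext h)
      refine SimpleGraph.comap_adj.mpr ?_
      rw [sClaw, SimpleGraph.fromRel_adj]
      exact ⟨by simp [f, hne], Or.inl ⟨rfl, hab⟩⟩
    have hTd : ({u : ↥(copySet A j) | (D j).le u ⟨v, hb⟩}).ncard ≤ (D j).depth := by
      rw [TreedepthDecomp.depth]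
      exact le_ciSup (f := fun b : ↥(copySet A j) => ({u | (D j).le u b} : Set _).ncard)
        (Set.Finite.bddAbove (Set.finite_range _)) (⟨v, hb⟩ : ↥(copySet A j))
    by_cases hvj : Sum.inr (Sum.inl j) ∈ A
    · -- v_j is present
      have hsub : {a : ↥A | stepLe H A D a ⟨Sum.inl (j, v), hb⟩} ⊆
          (f '' {u : ↥(copySet A j) | (D j).le u ⟨v, hb⟩}) ∪
            ({x : ↥A | x.1 = Sum.inr (Sum.inl j)} ∪
            {x : ↥A | x.1 = Sum.inr (Sum.inr ())}) := by
        rintro ⟨(⟨i, u⟩ | i | u), ha⟩ hmem <;>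
          simp only [Set.mem_setOf_eq, stepLe] at hmem <;>
          first
          | (obtain ⟨rfl, hle⟩ := hmem
             exact Or.inl ⟨⟨u, ha⟩, hle, rfl⟩)
          | (subst hmem; exact Or.inr (Or.inl rfl))
          | exact Or.inr (Or.inr rfl)
      have hplus : (H.induce (copySet A j)).cliqueNum + 1 ≤ ((sClaw H).induce A).cliqueNum := by
        refine cliqueNum_add_one_le_of_map _ _ f finj fadj ⟨Sum.inr (Sum.inl j), hvj⟩ ?_
        intro a
        refine SimpleGraph.comap_adj.mpr ?_
        rw [sClaw, SimpleGraph.fromRel_adj]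
        exact ⟨by simp [f], Or.inl rfl⟩
      calc {a : ↥A | (stepDecomp H A D).le a ⟨Sum.inl (j, v), hb⟩}.ncard
          ≤ ((f '' {u : ↥(copySet A j) | (D j).le u ⟨v, hb⟩}) ∪
            ({x : ↥A | x.1 = Sum.inr (Sum.inl j)} ∪
            {x : ↥A | x.1 = Sum.inr (Sum.inr ())})).ncard :=
            Set.ncard_le_ncard hsub (Set.toFinite _)
        _ ≤ (f '' {u : ↥(copySet A j) | (D j).le u ⟨v, hb⟩}).ncard +
            ({x : ↥A | x.1 = Sum.inr (Sum.inl j)} ∪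
            {x : ↥A | x.1 = Sum.inr (Sum.inr ())}).ncard := Set.ncard_union_le _ _
        _ ≤ (f '' {u : ↥(copySet A j) | (D j).le u ⟨v, hb⟩}).ncard +
            ({x : ↥A | x.1 = Sum.inr (Sum.inl j)}.ncard +
            {x : ↥A | x.1 = Sum.inr (Sum.inr ())}.ncard) :=
            Nat.add_le_add_left (Set.ncard_union_le _ _) _
        _ ≤ ({u : ↥(copySet A j) | (D j).le u ⟨v, hb⟩}).ncard + (1 + 1) := by
            rw [Set.ncard_image_of_injective _ finj]
            exact Nat.add_le_add_left (Nat.add_le_add (ncard_val_eq_le_one _ _)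
              (ncard_val_eq_le_one _ _)) _
        _ ≤ (D j).depth + 2 := by omega
        _ ≤ 2 * (H.induce (copySet A j)).cliqueNum + 2 := Nat.add_le_add_right (hD j) _
        _ ≤ 2 * ((sClaw H).induce A).cliqueNum := by omega
    · -- v_j is absent
      have hsub : {a : ↥A | stepLe H A D a ⟨Sum.inl (j, v), hb⟩} ⊆
          f '' {u : ↥(copySet A j) | (D j).le u ⟨v, hb⟩} := by
        rintro ⟨(⟨i, u⟩ | i | u), ha⟩ hmem <;>
          simp only [Set.mem_setOf_eq, stepLe] at hmem <;>
          first
          | (obtain ⟨rfl, hle⟩ := hmem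
             exact ⟨⟨u, ha⟩, hle, rfl⟩)
          | (subst hmem; exact absurd ha hvj)
          | exact absurd hmem hvj
      have hmono : (H.induce (copySet A j)).cliqueNum ≤ ((sClaw H).induce A).cliqueNum :=
        cliqueNum_le_of_map _ _ f finj fadj
      calc {a : ↥A | (stepDecomp H A D).le a ⟨Sum.inl (j, v), hb⟩}.ncard
          ≤ (f '' {u : ↥(copySet A j) | (D j).le u ⟨v, hb⟩}).ncard :=
            Set.ncard_le_ncard hsub (Set.toFinite _)
        _ = ({u : ↥(copySet A j) | (D j).le u ⟨v, hb⟩}).ncard :=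
            Set.ncard_image_of_injective _ finj
        _ ≤ (D j).depth := hTd
        _ ≤ 2 * (H.induce (copySet A j)).cliqueNum := hD j
        _ ≤ 2 * ((sClaw H).induce A).cliqueNum := by omega
  -- Case 2: the vertex v_j
  · have hsub : {a : ↥A | stepLe H A D a ⟨Sum.inr (Sum.inl j), hb⟩} ⊆
        ({x : ↥A | x.1 = Sum.inr (Sum.inl j)} ∪
          {x : ↥A | x.1 = Sum.inr (Sum.inr ())}) := by
      rintro ⟨(⟨i, u⟩ | i | u), ha⟩ hmem <;>
        simp only [Set.mem_setOf_eq, stepLe] at hmem <;>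
        first
        | exact hmem.elim
        | (subst hmem; exact Or.inl rfl)
        | exact Or.inr rfl
    calc {a : ↥A | (stepDecomp H A D).le a ⟨Sum.inr (Sum.inl j), hb⟩}.ncard
        ≤ _ := Set.ncard_le_ncard hsub (Set.toFinite _)
      _ ≤ {x : ↥A | x.1 = Sum.inr (Sum.inl j)}.ncard +
          {x : ↥A | x.1 = Sum.inr (Sum.inr ())}.ncard := Set.ncard_union_le _ _
      _ ≤ 2 * ((sClaw H).induce A).cliqueNum := by
          have h1 := ncard_val_eq_le_one A (Sum.inr (Sum.inl j))
          have h2 := ncard_val_eq_le_one A (Sum.inr (Sum.inr ()))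
          omega
  -- Case 3: the vertex w
  · have hsub : {a : ↥A | stepLe H A D a ⟨Sum.inr (Sum.inr v), hb⟩} ⊆
        {x : ↥A | x.1 = Sum.inr (Sum.inr ())} := by
      rintro ⟨(⟨i, u⟩ | i | u), ha⟩ hmem <;>
        simp only [Set.mem_setOf_eq, stepLe] at hmem <;>
        first
        | exact hmem.elim
        | exact rfl
    calc {a : ↥A | (stepDecomp H A D).le a ⟨Sum.inr (Sum.inr v), hb⟩}.ncard
        ≤ _ := Set.ncard_le_ncard hsub (Set.toFinite _)
      _ ≤ 2 * ((sClaw H).induce A).cliqueNum := by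
          have h1 := ncard_val_eq_le_one A (Sum.inr (Sum.inr ()) :
            (Fin 3 × W) ⊕ (Fin 3 ⊕ Unit))
          omega

/-- The discrete treedepth decomposition of an edgeless graph. -/
def botDecomp {V : Type*} (A : Set V) : TreedepthDecomp ((⊥ : SimpleGraph V).induce A) where
  le := Eq
  le_refl := fun _ => rfl
  le_trans := fun h h' => h.trans h'
  le_antisymm := fun h _ => h
  ancestors_chain := fun _ {a b} ha hb => Or.inl (ha.trans hb.symm)
  covers := fun u v h => absurd h (by simp)

lemma bot_bound {V : Type} [Fintype V] (A : Set V) :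
    treedepth ((⊥ : SimpleGraph V).induce A) ≤ 2 * ((⊥ : SimpleGraph V).induce A).cliqueNum := by
  classical
  letI : Fintype ↥A := Fintype.ofFinite _
  refine le_trans (treedepth_le_depth _ (botDecomp A)) ?_
  rw [TreedepthDecomp.depth]
  rcases isEmpty_or_nonempty ↥A with h | h
  · simp [ciSup_of_empty]
  have hω1 : 1 ≤ ((⊥ : SimpleGraph V).induce A).cliqueNum := one_le_cliqueNum _ h.some
  apply ciSup_le
  intro b
  have hsub : {a : ↥A | (botDecomp A).le a b} ⊆ {b} := fun a ha => ha
  calc {a : ↥A | (botDecomp A).le a b}.ncard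
      ≤ ({b} : Set ↥A).ncard := Set.ncard_le_ncard hsub (Set.toFinite _)
    _ = 1 := Set.ncard_singleton _
    _ ≤ 2 * ((⊥ : SimpleGraph V).induce A).cliqueNum := by omega

lemma sgraph_bound : ∀ (m : ℕ) (A : Set (SType m)),
    treedepth ((Sgraph m).induce A) ≤ 2 * ((Sgraph m).induce A).cliqueNum := by
  intro m
  induction m with
  | zero => intro A; exact bot_bound A
  | succ m ih =>
    intro A
    choose D hD using fun j : Fin 3 =>
      exists_decomp_treedepth ((Sgraph m).induce (copySet (W := SType m) A j))
    refine le_trans (treedepth_le_depth _ (stepDecomp (Sgraph m) A D)) ?_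
    exact step_depth_le (Sgraph m) A D fun j => (hD j).trans_le (ih _)


end AuxProofs

theorem stmt7 (n : ℕ) (hn : 1 ≤ n) (A : Set (SType (n - 1))) :
    treedepth ((Sgraph (n - 1)).induce A) ≤ 2 * ((Sgraph (n - 1)).induce A).cliqueNum :=
  sgraph_bound (n - 1) A
end Awesome
end

section
/- Let ρ be a graph parameter with a nondecreasing function h such that ω(G) ≤ h(ρ(G)) for all graphs G, let c be an integer, and let 𝒢 be a hereditary graph class with a nondecreasing function f such that the minimum size of a (ρ,c)-modulator of G is at most f(ω(G)) for all G ∈ 𝒢. Then for every G ∈ 𝒢, every minimum-cardinality (ρ,c)-modulator S of G satisfies α(G[S]) ≤ f(h(c)+1). -/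
namespace Awesome

open SimpleGraph

lemma induce_induce_iso' {V : Type} (G : SimpleGraph V) (A : Set V) (B : Set ↥A) :
    Nonempty ((G.induce A).induce B ≃g G.induce (Subtype.val '' B)) :=
  ⟨⟨Equiv.Set.image Subtype.val B Subtype.val_injective, fun {_ _} => Iff.rfl⟩⟩

theorem stmt9 (ρ : GraphParam)
    (hiso : ∀ {V W : Type} (G : SimpleGraph V) (H : SimpleGraph W),
      Nonempty (G ≃g H) → ρ G = ρ H)
    (h : ℕ → ℕ) (hmono : Monotone h)
    (hωρ : ∀ (V : Type) [Fintype V] (G : SimpleGraph V), G.cliqueNum ≤ h (ρ G))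
    (c : ℕ)
    (𝒢 : ∀ V : Type, SimpleGraph V → Prop)
    (hered : ∀ (V : Type) (G : SimpleGraph V), 𝒢 V G → ∀ S : Set V, 𝒢 S (G.induce S))
    (f : ℕ → ℕ) (fmono : Monotone f)
    (hbound : ∀ (V : Type) [Fintype V] (G : SimpleGraph V), 𝒢 V G →
      modNum ρ c G ≤ f G.cliqueNum)
    (V : Type) [Fintype V] (G : SimpleGraph V) (hG : 𝒢 V G)
    (S : Set V) (hmod : IsModulator ρ c G S) (hmin : S.ncard = modNum ρ c G) :
    indepNumOn G S ≤ f (h c + 1) := by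
  classical
  have key : ∀ T : Finset V, ↑T ⊆ S → (∀ u ∈ T, ∀ v ∈ T, ¬ G.Adj u v) →
      T.card ≤ f (h c + 1) := by
    intro T hTS hTind
    set A : Set V := Sᶜ ∪ ↑T with hA
    haveI : Fintype ↥A := A.toFinite.fintype
    haveI : Fintype ↥(Sᶜ : Set V) := (Sᶜ : Set V).toFinite.fintype
    have hG' : 𝒢 ↥A (G.induce A) := hered V G hG A
    have hmod' : ρ (G.induce (Sᶜ : Set V)) ≤ c := hmod
    have hSc : (G.induce (Sᶜ : Set V)).cliqueNum ≤ h c :=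
      (hωρ _ _).trans (hmono hmod')
    -- clique number bound for G.induce A
    have hclq : (G.induce A).cliqueNum ≤ h c + 1 := by
      obtain ⟨s, hs⟩ := (G.induce A).exists_isNClique_cliqueNum
      rw [← hs.card_eq]
      have hsplit := Finset.card_filter_add_card_filter_not
        (s := s) (p := fun x : ↥A => (x : V) ∈ S)
      set s₁ := s.filter (fun x : ↥A => (x : V) ∈ S) with hs₁
      set s₂ := s.filter (fun x : ↥A => ¬ (x : V) ∈ S) with hs₂
      have h1 : s₁.card ≤ 1 := by
        rw [Finset.card_le_one]
        intro a ha b hb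
        by_contra hab
        have haS : (a : V) ∈ S := (Finset.mem_filter.1 ha).2
        have hbS : (b : V) ∈ S := (Finset.mem_filter.1 hb).2
        have haT : (a : V) ∈ T := by
          rcases a.2 with h' | h'
          · exact absurd haS h'
          · exact h'
        have hbT : (b : V) ∈ T := by
          rcases b.2 with h' | h'
          · exact absurd hbS h'
          · exact h'
        have hadj : (G.induce A).Adj a b :=
          hs.isClique (Finset.mem_filter.1 ha).1 (Finset.mem_filter.1 hb).1 hab
        exact hTind _ haT _ hbT hadj
      have h2 : s₂.card ≤ h c := by
        have hmem : ∀ x : {y // y ∈ s₂}, (x.1 : V) ∈ (Sᶜ : Set V) := by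
          intro x
          have hx : x.1 ∈ s.filter (fun x : ↥A => ¬ (x : V) ∈ S) := x.2
          exact (Finset.mem_filter.1 hx).2
        set t : Finset ↥(Sᶜ : Set V) :=
          s₂.attach.image (fun x => (⟨(x.1 : V), hmem x⟩ : ↥(Sᶜ : Set V)))
          with ht
        have hinj : Function.Injective
            (fun x : {y // y ∈ s₂} =>
              (⟨(x.1 : V), hmem x⟩ : ↥(Sᶜ : Set V))) := by
          intro x y hxy
          have hV : ((x.1 : ↥A) : V) = ((y.1 : ↥A) : V) :=
            congrArg (Subtype.val : ↥(Sᶜ : Set V) → V) hxy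
          exact Subtype.ext (Subtype.ext hV)
        have hcard : t.card = s₂.card := by
          rw [ht, Finset.card_image_of_injective _ hinj, Finset.card_attach]
        have hclique : (G.induce (Sᶜ : Set V)).IsClique ↑t := by
          intro a ha b hb hab
          simp only [ht, Finset.coe_image, Set.mem_image, Finset.mem_coe,
            Finset.mem_attach, true_and] at ha hb
          obtain ⟨x, hx⟩ := ha
          obtain ⟨y, hy⟩ := hb
          have hxy : x.1 ≠ y.1 := by
            intro hxe
            apply hab
            rw [← hx, ← hy]
            exact Subtype.ext (congrArg (Subtype.val : ↥A → V) hxe)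
          have hadj : (G.induce A).Adj x.1 y.1 :=
            hs.isClique (Finset.mem_filter.1 x.2).1 (Finset.mem_filter.1 y.2).1 hxy
          have hGadj : G.Adj (x.1 : V) (y.1 : V) := hadj
          subst hx hy
          exact hGadj
        calc s₂.card = t.card := hcard.symm
          _ ≤ (G.induce (Sᶜ : Set V)).cliqueNum :=
              SimpleGraph.IsClique.card_le_cliqueNum (tc := hclique)
          _ ≤ h c := hSc
      omega
    have hmodle : modNum ρ c (G.induce A) ≤ f (h c + 1) :=
      (hbound _ _ hG').trans (fmono hclq)
    -- the modulator set for G.induce A is nonempty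
    have hB₀ : IsModulator ρ c (G.induce A) {x : ↥A | (x : V) ∈ S} := by
      show ρ ((G.induce A).induce ({x : ↥A | (x : V) ∈ S}ᶜ)) ≤ c
      have himg : Subtype.val '' ({x : ↥A | (x : V) ∈ S}ᶜ) = Sᶜ := by
        ext v
        constructor
        · rintro ⟨x, hx, rfl⟩
          exact hx
        · intro hv
          exact ⟨⟨v, Or.inl hv⟩, hv, rfl⟩
      rw [hiso _ _ (induce_induce_iso' G A ({x : ↥A | (x : V) ∈ S}ᶜ)), himg]
      exact hmod
    have hne : {k | ∃ S' : Set ↥A, IsModulator ρ c (G.induce A) S' ∧ S'.ncard = k}.Nonempty :=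
      ⟨_, _, hB₀, rfl⟩
    obtain ⟨S', hS'mod, hS'card⟩ := Nat.sInf_mem hne
    -- build a modulator of G from S'
    set S'' : Set V := (Subtype.val '' (S'ᶜ))ᶜ with hS''
    have hS''mod : IsModulator ρ c G S'' := by
      show ρ (G.induce (((Subtype.val '' (S'ᶜ))ᶜ)ᶜ)) ≤ c
      rw [compl_compl, ← hiso _ _ (induce_induce_iso' G A (S'ᶜ))]
      exact hS'mod
    have hle1 : S.ncard ≤ S''.ncard := by
      rw [hmin]
      exact Nat.sInf_le ⟨S'', hS''mod, rfl⟩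
    have hsub : S'' ⊆ (S \ ↑T) ∪ Subtype.val '' S' := by
      intro v hv
      have hv' : v ∉ Subtype.val '' (S'ᶜ) := hv
      by_cases hvA : v ∈ A
      · by_cases hvS' : (⟨v, hvA⟩ : ↥A) ∈ S'
        · exact Or.inr ⟨⟨v, hvA⟩, hvS', rfl⟩
        · exact absurd ⟨⟨v, hvA⟩, hvS', rfl⟩ hv'
      · refine Or.inl ⟨?_, fun hvT => hvA (Or.inr hvT)⟩
        by_contra hvS
        exact hvA (Or.inl hvS)
    have hle2 : S''.ncard ≤ (S \ ↑T).ncard + S'.ncard := by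
      calc S''.ncard ≤ ((S \ ↑T) ∪ Subtype.val '' S').ncard :=
            Set.ncard_le_ncard hsub (Set.toFinite _)
        _ ≤ (S \ ↑T).ncard + (Subtype.val '' S').ncard := Set.ncard_union_le _ _
        _ = (S \ ↑T).ncard + S'.ncard := by
            rw [Set.ncard_image_of_injective _ Subtype.val_injective]
    have heq : (S \ ↑T).ncard + (↑T : Set V).ncard = S.ncard :=
      Set.ncard_diff_add_ncard_of_subset hTS
    have hTcard : (↑T : Set V).ncard = T.card := by simp [Set.ncard_coe_finset]
    have hfin : T.card ≤ S'.ncard := by omega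
    calc T.card ≤ S'.ncard := hfin
      _ = modNum ρ c (G.induce A) := hS'card
      _ ≤ f (h c + 1) := hmodle
  -- conclude
  unfold indepNumOn
  apply csSup_le
  · exact ⟨0, ∅, by simp⟩
  · rintro k ⟨T, hTS, hTind, rfl⟩
    exact key T hTS hTind
end Awesome
end

section
/- Let 𝒢 be a hereditary graph class. If there is a nondecreasing function f such that every G ∈ 𝒢 has vertex cover number vc(G) ≤ f(ω(G)), then every G ∈ 𝒢 has a minimum vertex cover S with α(G[S]) ≤ f(3), i.e., the minimum vertex covers have independence number bounded by a constant depending only on f. -/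
namespace Awesome

open SimpleGraph

theorem stmt10 (𝒢 : ∀ V : Type, SimpleGraph V → Prop)
    (hered : ∀ (V : Type) (G : SimpleGraph V), 𝒢 V G → ∀ S : Set V, 𝒢 S (G.induce S))
    (f : ℕ → ℕ) (fmono : Monotone f)
    (hbound : ∀ (V : Type) [Fintype V] (G : SimpleGraph V), 𝒢 V G → vcNum G ≤ f G.cliqueNum)
    (V : Type) [Fintype V] (G : SimpleGraph V) (hG : 𝒢 V G) :
    ∃ S : Set V, IsVertexCover G S ∧ S.ncard = vcNum G ∧ indepNumOn G S ≤ f 3 := by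
  classical
  have hne : {k | ∃ S : Set V, IsVertexCover G S ∧ S.ncard = k}.Nonempty :=
    ⟨(Set.univ : Set V).ncard, Set.univ, fun u v _ => Or.inl trivial, rfl⟩
  obtain ⟨S, hSvc, hScard⟩ := Nat.sInf_mem hne
  have hScard' : S.ncard = vcNum G := hScard
  refine ⟨S, hSvc, hScard', ?_⟩
  apply csSup_le'
  rintro k ⟨T, hTS, hTind, rfl⟩
  set W : Set V := Sᶜ ∪ ↑T with hWdef
  haveI : Fintype ↥W := (Set.toFinite W).fintype
  have hGW : 𝒢 W (G.induce W) := hered V G hG W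
  have hclique : (G.induce W).cliqueNum ≤ 3 := by
    apply csSup_le'
    rintro n ⟨s, hs⟩
    by_contra hn
    push_neg at hn
    have hcard : (Finset.univ : Finset Bool).card < s.card := by
      rw [hs.card_eq]; simp; omega
    obtain ⟨u, hu, v, hv, huv, heq⟩ :=
      Finset.exists_ne_map_eq_of_card_lt_of_maps_to hcard
        (fun x _ => Finset.mem_univ (decide ((x : V) ∈ S)))
    have hadj : G.Adj ↑u ↑v := hs.1 hu hv huv
    have hiff : ((u : V) ∈ S ↔ (v : V) ∈ S) := decide_eq_decide.mp heq
    by_cases h : (u : V) ∈ S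
    · have hv' : (v : V) ∈ S := hiff.mp h
      have huT : (u : V) ∈ T := by
        rcases u.2 with h1 | h1
        · exact absurd h h1
        · exact h1
      have hvT : (v : V) ∈ T := by
        rcases v.2 with h1 | h1
        · exact absurd hv' h1
        · exact h1
      exact hTind _ huT _ hvT hadj
    · rcases hSvc hadj with h1 | h1
      · exact h h1
      · exact h (hiff.mpr h1)
  have hvc3 : vcNum (G.induce W) ≤ f 3 := le_trans (hbound ↥W (G.induce W) hGW) (fmono hclique)
  have hne' : {k | ∃ C : Set ↥W, IsVertexCover (G.induce W) C ∧ C.ncard = k}.Nonempty :=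
    ⟨(Set.univ : Set ↥W).ncard, Set.univ, fun u v _ => Or.inl trivial, rfl⟩
  obtain ⟨C, hCvc, hCcard⟩ := Nat.sInf_mem hne'
  have hCcard' : C.ncard = vcNum (G.induce W) := hCcard
  have hCle : C.ncard ≤ f 3 := le_trans (le_of_eq hCcard) hvc3
  set S' : Set V := (S \ ↑T) ∪ (Subtype.val '' C) with hS'def
  have hS'vc : IsVertexCover G S' := by
    intro u v huv
    by_cases hu : u ∈ S \ ↑T
    · exact Or.inl (Or.inl hu)
    · by_cases hv : v ∈ S \ ↑T
      · exact Or.inr (Or.inl hv)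
      · have huW : u ∈ W := by
          by_cases h : u ∈ S
          · right
            by_contra hT
            exact hu ⟨h, hT⟩
          · exact Or.inl h
        have hvW : v ∈ W := by
          by_cases h : v ∈ S
          · right
            by_contra hT
            exact hv ⟨h, hT⟩
          · exact Or.inl h
        have hadj' : (G.induce W).Adj ⟨u, huW⟩ ⟨v, hvW⟩ := huv
        rcases hCvc hadj' with h1 | h1
        · exact Or.inl (Or.inr ⟨_, h1, rfl⟩)
        · exact Or.inr (Or.inr ⟨_, h1, rfl⟩)
  have hS'le : S'.ncard ≤ (S.ncard - T.card) + C.ncard := by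
    calc S'.ncard ≤ (S \ ↑T).ncard + (Subtype.val '' C).ncard := Set.ncard_union_le _ _
      _ = (S.ncard - T.card) + C.ncard := by
          rw [Set.ncard_diff hTS, Set.ncard_image_of_injective _ Subtype.val_injective,
            Set.ncard_coe_finset]
  have hmin : vcNum G ≤ S'.ncard := Nat.sInf_le ⟨S', hS'vc, rfl⟩
  have hTle : T.card ≤ S.ncard := by
    rw [← Set.ncard_coe_finset]
    exact Set.ncard_le_ncard hTS (Set.toFinite S)
  omega
end Awesome
end
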